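/- arXiv:1303.2598 — 3 statements merged into one kernel-verified Lean document; each statement's English description precedes it below -/
import Mathlib

section
/- Let L be a countable linear order partitioned into an initial convex part L⁰ and a final convex part L¹ (every element of L⁰ precedes every element of L¹), where the induced order on L⁰ is the ω*-sum of a sequence ⟨L⁰_i : i∈ω⟩ of members of ℋ satisfying condition (*), the induced order on L¹ is the ω-sum of a sequence ⟨L¹_i : i∈ω⟩ of members of ℋ satisfying condition (*), and L is not order-isomorphic to any member of ℋ. Then a subset A ⊆ L contains a subset whose induced order is order-isomorphic to L if and only if for all i, m ∈ ω there exists a finite set K ⊆ ω∖m such that L⁰_i order-embeds into A ∩ ⋃_{j∈K} L⁰_j and L¹_i order-embeds into A ∩ ⋃_{j∈K} L¹_j (each with the induced order). -/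
open Set

/-- A linear order is scattered iff the rationals do not order-embed into it. -/
def IsScattered (L : Type*) [LinearOrder L] : Prop :=
  IsEmpty (ℚ ↪o L)

/-- `Copies L` is the set of all subsets of `L` whose induced order is
order-isomorphic to `L`. -/
def Copies (L : Type*) [LinearOrder L] : Set (Set L) :=
  { A | Nonempty (↥A ≃o L) }

/-- The separative-modification order `≤*` on subsets of `L`:
`A ≤* B` iff every copy of `L` inside `A` contains a copy of `L` inside `C ∩ B`. -/
def copyLE {L : Type*} [LinearOrder L] (A B : Set L) : Prop :=
  ∀ C ∈ Copies L, C ⊆ A → ∃ D ∈ Copies L, D ⊆ C ∩ B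

/-- The separative-modification order on an abstract partial order. -/
def smLE {P : Type*} [PartialOrder P] (p q : P) : Prop :=
  ∀ r ≤ p, ∃ s ≤ r, s ≤ q

/-- The class ℋ of hereditarily additively indecomposable countable linear
orders, realized as subsets of ℚ (every countable linear order embeds in ℚ):
the smallest class containing the singletons, closed under order-isomorphism,
and closed under ω-sums and ω*-sums of sequences of members satisfying
condition (*) (each member embeds into infinitely many members of the sequence). -/
inductive InH : Set ℚ → Prop
  | singleton (q : ℚ) : InH {q}
  | iso {A B : Set ℚ} : InH A → Nonempty (↥A ≃o ↥B) → InH B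
  | omegaSum (M : ℕ → Set ℚ)
      (hne : ∀ i, (M i).Nonempty)
      (hH : ∀ i, InH (M i))
      (hstar : ∀ i, {j | Nonempty (↥(M i) ↪o ↥(M j))}.Infinite)
      (hlt : ∀ i j, i < j → ∀ x ∈ M i, ∀ y ∈ M j, x < y) :
      InH (⋃ i, M i)
  | omegaStarSum (M : ℕ → Set ℚ)
      (hne : ∀ i, (M i).Nonempty)
      (hH : ∀ i, InH (M i))
      (hstar : ∀ i, {j | Nonempty (↥(M i) ↪o ↥(M j))}.Infinite)
      (hlt : ∀ i j, i < j → ∀ x ∈ M i, ∀ y ∈ M j, y < x) :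
      InH (⋃ i, M i)

/-- A subset of a linear order whose induced order belongs to ℋ. -/
def SetInH {L : Type*} [LinearOrder L] (A : Set L) : Prop :=
  ∃ M : Set ℚ, InH M ∧ Nonempty (↥A ≃o ↥M)

/-- A linear order belonging to ℋ (up to order-isomorphism). -/
def TypeInH (L : Type*) [LinearOrder L] : Prop :=
  ∃ M : Set ℚ, InH M ∧ Nonempty (L ≃o ↥M)

/-- `S` is the ω-sum of the sequence `Li` of members of ℋ satisfying (*):
`S` is the disjoint union of the nonempty sets `Li i`, every element of `Li i`
precedes every element of `Li j` for `i < j`, each `Li i` has induced order in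
ℋ, and each `Li i` order-embeds into `Li j` for infinitely many `j`. -/
structure IsOmegaSumH {L : Type*} [LinearOrder L] (S : Set L) (Li : ℕ → Set L) : Prop where
  union : (⋃ i, Li i) = S
  nonemp : ∀ i, (Li i).Nonempty
  disj : ∀ i j, i ≠ j → Disjoint (Li i) (Li j)
  mono : ∀ i j, i < j → ∀ x ∈ Li i, ∀ y ∈ Li j, x < y
  inH : ∀ i, SetInH (Li i)
  star : ∀ i, {j | Nonempty (↥(Li i) ↪o ↥(Li j))}.Infinite

/-- `S` is the ω*-sum of the sequence `Li` of members of ℋ satisfying (*). -/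
structure IsOmegaStarSumH {L : Type*} [LinearOrder L] (S : Set L) (Li : ℕ → Set L) : Prop where
  union : (⋃ i, Li i) = S
  nonemp : ∀ i, (Li i).Nonempty
  disj : ∀ i j, i ≠ j → Disjoint (Li i) (Li j)
  mono : ∀ i j, i < j → ∀ x ∈ Li i, ∀ y ∈ Li j, y < x
  inH : ∀ i, SetInH (Li i)
  star : ∀ i, {j | Nonempty (↥(Li i) ↪o ↥(Li j))}.Infinite

/-- A partition of a linear order into `k` consecutive convex parts, each of
whose induced orders belongs to ℋ. -/
def HPartitionInH {L : Type*} [LinearOrder L] (k : ℕ) (P : ℕ → Set L) : Prop :=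
  (⋃ i < k, P i) = univ ∧ (∀ i < k, (P i).Nonempty) ∧
  (∀ i < k, ∀ j < k, i ≠ j → Disjoint (P i) (P j)) ∧
  (∀ i < k, ∀ j < k, i < j → ∀ x ∈ P i, ∀ y ∈ P j, x < y) ∧
  (∀ i < k, SetInH (P i))


section Aux

variable {α : Type*} {β : Type*} [LinearOrder α] [LinearOrder β]

/-- Inclusion of subsets as an order embedding. -/
noncomputable def inclEmb {s t : Set α} (h : s ⊆ t) : ↥s ↪o ↥t :=
  OrderEmbedding.ofStrictMono (fun x => ⟨x.1, h x.2⟩)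
    (fun a b hab => by exact Subtype.mk_lt_mk.2 (Subtype.coe_lt_coe.2 hab))

lemma exists_selector (J : ℕ → Set ℕ) (hJ : ∀ i, (J i).Infinite) (m : ℕ) :
    ∃ φ : ℕ → ℕ, StrictMono φ ∧ (∀ i, φ i ∈ J i) ∧ ∀ i, m ≤ φ i := by
  have pick : ∀ i b, ∃ j, j ∈ J i ∧ b < j := by
    intro i b
    obtain ⟨j, hj, hb⟩ := (hJ i).exists_gt b
    exact ⟨j, hj, hb⟩
  choose c hc1 hc2 using pick
  refine ⟨fun n => Nat.rec (c 0 m) (fun k ih => c (k + 1) ih) n, ?_, ?_, ?_⟩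
  case _ =>
    exact strictMono_nat_of_lt_succ (fun n => hc2 _ _)
  case _ =>
    intro i
    cases i with
    | zero => exact hc1 0 m
    | succ n => exact hc1 _ _
  case _ =>
    intro i
    have h0 : m < Nat.rec (motive := fun _ => ℕ) (c 0 m) (fun k ih => c (k + 1) ih) 0 := hc2 0 m
    exact le_trans h0.le ((strictMono_nat_of_lt_succ (fun n => hc2 _ _)).monotone (Nat.zero_le i))

lemma glue_asc (A : ℕ → Set α) (B : ℕ → Set β)
    (hA : ∀ i j, i < j → ∀ x ∈ A i, ∀ y ∈ A j, x < y)
    (hB : ∀ i j, i < j → ∀ x ∈ B i, ∀ y ∈ B j, x < y)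
    (φ : ℕ → ℕ) (hφ : StrictMono φ)
    (e : ∀ i, ↥(A i) ↪o ↥(B (φ i))) :
    Nonempty (↥(⋃ i, A i) ↪o ↥(⋃ i, B i)) := by
  classical
  have key : ∀ (i j : ℕ) (a b : α) (ha : a ∈ A i) (hb : b ∈ A j), a < b →
      ((e i ⟨a, ha⟩ : ↥(B (φ i))) : β) < ((e j ⟨b, hb⟩ : ↥(B (φ j))) : β) := by
    intro i j a b ha hb hab
    rcases lt_trichotomy i j with h | h | h
    · exact hB (φ i) (φ j) (hφ h) _ (e i ⟨a, ha⟩).2 _ (e j ⟨b, hb⟩).2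
    · subst h
      exact Subtype.coe_lt_coe.2 ((e i).strictMono (Subtype.mk_lt_mk.2 hab))
    · exact absurd (hA j i h b hb a ha) (not_lt.2 hab.le)
  have mem1 : ∀ x : ↥(⋃ i, A i), ∃ i, (x : α) ∈ A i := fun x => mem_iUnion.1 x.2
  choose idx hidx using mem1
  exact ⟨OrderEmbedding.ofStrictMono
    (fun x => ⟨((e (idx x) ⟨x.1, hidx x⟩ : ↥(B (φ (idx x)))) : β),
      mem_iUnion.2 ⟨φ (idx x), (e (idx x) ⟨x.1, hidx x⟩).2⟩⟩)
    (fun x y hxy => Subtype.mk_lt_mk.2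
      (key (idx x) (idx y) x.1 y.1 (hidx x) (hidx y) (Subtype.coe_lt_coe.2 hxy)))⟩

lemma glue_desc (A : ℕ → Set α) (B : ℕ → Set β)
    (hA : ∀ i j, i < j → ∀ x ∈ A i, ∀ y ∈ A j, y < x)
    (hB : ∀ i j, i < j → ∀ x ∈ B i, ∀ y ∈ B j, y < x)
    (φ : ℕ → ℕ) (hφ : StrictMono φ)
    (e : ∀ i, ↥(A i) ↪o ↥(B (φ i))) :
    Nonempty (↥(⋃ i, A i) ↪o ↥(⋃ i, B i)) := by
  classical
  have key : ∀ (i j : ℕ) (a b : α) (ha : a ∈ A i) (hb : b ∈ A j), a < b →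
      ((e i ⟨a, ha⟩ : ↥(B (φ i))) : β) < ((e j ⟨b, hb⟩ : ↥(B (φ j))) : β) := by
    intro i j a b ha hb hab
    rcases lt_trichotomy i j with h | h | h
    · exact absurd (hA i j h a ha b hb) (not_lt.2 hab.le)
    · subst h
      exact Subtype.coe_lt_coe.2 ((e i).strictMono (Subtype.mk_lt_mk.2 hab))
    · exact hB (φ j) (φ i) (hφ h) _ (e j ⟨b, hb⟩).2 _ (e i ⟨a, ha⟩).2
  have mem1 : ∀ x : ↥(⋃ i, A i), ∃ i, (x : α) ∈ A i := fun x => mem_iUnion.1 x.2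
  choose idx hidx using mem1
  exact ⟨OrderEmbedding.ofStrictMono
    (fun x => ⟨((e (idx x) ⟨x.1, hidx x⟩ : ↥(B (φ (idx x)))) : β),
      mem_iUnion.2 ⟨φ (idx x), (e (idx x) ⟨x.1, hidx x⟩).2⟩⟩)
    (fun x y hxy => Subtype.mk_lt_mk.2
      (key (idx x) (idx y) x.1 y.1 (hidx x) (hidx y) (Subtype.coe_lt_coe.2 hxy)))⟩

lemma tail_emb_asc (A : ℕ → Set α)
    (hA : ∀ i j, i < j → ∀ x ∈ A i, ∀ y ∈ A j, x < y)
    (hstar : ∀ i, {j | Nonempty (↥(A i) ↪o ↥(A j))}.Infinite) (i0 : ℕ) :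
    Nonempty (↥(⋃ i, A i) ↪o ↥(⋃ i, A (i + (i0 + 1)))) := by
  obtain ⟨φ, hm, hmem, hge⟩ := exists_selector _ hstar (i0 + 1)
  refine glue_asc A (fun i => A (i + (i0 + 1))) hA
    (fun i j h x hx y hy => hA _ _ (by omega) x hx y hy)
    (fun i => φ i - (i0 + 1))
    (fun a b hab => by
      show φ a - (i0 + 1) < φ b - (i0 + 1)
      have h1 := hm hab; have h2 := hge a; omega)
    (fun i => ?_)
  have heq : (φ i - (i0 + 1)) + (i0 + 1) = φ i := Nat.sub_add_cancel (hge i)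
  show ↥(A i) ↪o ↥(A ((φ i - (i0 + 1)) + (i0 + 1)))
  rw [heq]
  exact (hmem i).some

lemma tail_emb_desc (A : ℕ → Set α)
    (hA : ∀ i j, i < j → ∀ x ∈ A i, ∀ y ∈ A j, y < x)
    (hstar : ∀ i, {j | Nonempty (↥(A i) ↪o ↥(A j))}.Infinite) (i0 : ℕ) :
    Nonempty (↥(⋃ i, A i) ↪o ↥(⋃ i, A (i + (i0 + 1)))) := by
  obtain ⟨φ, hm, hmem, hge⟩ := exists_selector _ hstar (i0 + 1)
  refine glue_desc A (fun i => A (i + (i0 + 1))) hA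
    (fun i j h x hx y hy => hA _ _ (by omega) x hx y hy)
    (fun i => φ i - (i0 + 1))
    (fun a b hab => by
      show φ a - (i0 + 1) < φ b - (i0 + 1)
      have h1 := hm hab; have h2 := hge a; omega)
    (fun i => ?_)
  have heq : (φ i - (i0 + 1)) + (i0 + 1) = φ i := Nat.sub_add_cancel (hge i)
  show ↥(A i) ↪o ↥(A ((φ i - (i0 + 1)) + (i0 + 1)))
  rw [heq]
  exact (hmem i).some

end Aux
section InHLemmas

universe u

lemma InH.embed_union_le : ∀ {M : Set ℚ}, InH M →
    ∀ {β : Type u} [LinearOrder β] (D : ℕ → Set β)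
      (_ : ∀ i j, i < j → ∀ x ∈ D i, ∀ y ∈ D j, x < y) (k : ℕ)
      (_ : ↥M ↪o ↥(⋃ j, ⋃ (_ : j ≤ k), D j)),
      ∃ t ≤ k, Nonempty (↥M ↪o ↥(D t)) := by
  intro M hM
  induction hM with
  | singleton q =>
    intro β _ D hD k f
    have hmem : ((f ⟨q, rfl⟩ : ↥(⋃ j, ⋃ (_ : j ≤ k), D j)) : β) ∈ ⋃ j, ⋃ (_ : j ≤ k), D j :=
      (f ⟨q, rfl⟩).2
    rw [mem_iUnion₂] at hmem
    obtain ⟨t, ht, hmem⟩ := hmem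
    refine ⟨t, ht, ⟨OrderEmbedding.ofStrictMono (fun _ => ⟨_, hmem⟩) ?_⟩⟩
    intro a b hab
    exfalso
    have ha : (a : ℚ) = q := a.2
    have hb : (b : ℚ) = q := b.2
    have : a = b := Subtype.ext (ha.trans hb.symm)
    exact absurd hab (by simp [this])
  | iso hA e ih =>
    intro β _ D hD k f
    obtain ⟨e'⟩ := e
    obtain ⟨t, ht, ⟨w⟩⟩ := ih D hD k (e'.toOrderEmbedding.trans f)
    exact ⟨t, ht, ⟨e'.symm.toOrderEmbedding.trans w⟩⟩
  | omegaSum M hne hH hstar hlt ih =>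
    intro β _ D hD k f
    clear ih
    induction k generalizing D with
    | zero =>
      have hU : (⋃ j, ⋃ (_ : j ≤ 0), D j) = D 0 := by simp [Nat.le_zero]
      exact ⟨0, le_rfl, ⟨f.trans (OrderIso.setCongr _ _ hU).toOrderEmbedding⟩⟩
    | succ k ihk =>
      by_cases hall : ∀ x : ↥(⋃ i, M i), ((f x : ↥(⋃ j, ⋃ (_ : j ≤ k + 1), D j)) : β) ∈ D 0
      · refine ⟨0, Nat.zero_le _, ⟨OrderEmbedding.ofStrictMono (fun x => ⟨_, hall x⟩) ?_⟩⟩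
        intro a b hab
        exact Subtype.mk_lt_mk.2 (Subtype.coe_lt_coe.2 (f.strictMono hab))
      · push_neg at hall
        obtain ⟨x₀, hx₀⟩ := hall
        obtain ⟨j0, hj0k, hj0⟩ := mem_iUnion₂.1 (f x₀).2
        have hj0pos : 1 ≤ j0 := by
          rcases Nat.eq_zero_or_pos j0 with h | h
          · exact absurd (h ▸ hj0) hx₀
          · exact h
        obtain ⟨i0, hi0⟩ := mem_iUnion.1 x₀.2
        obtain ⟨tl⟩ := tail_emb_asc M hlt hstar i0
        have hmemM : ∀ y : ↥(⋃ i, M (i + (i0 + 1))), (y : ℚ) ∈ ⋃ i, M i := by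
          intro y
          obtain ⟨i, hi⟩ := mem_iUnion.1 y.2
          exact mem_iUnion.2 ⟨i + (i0 + 1), hi⟩
        have hgt : ∀ y : ↥(⋃ i, M (i + (i0 + 1))), (x₀ : ℚ) < (y : ℚ) := by
          intro y
          obtain ⟨i, hi⟩ := mem_iUnion.1 y.2
          exact hlt i0 (i + (i0 + 1)) (by omega) _ hi0 _ hi
        have hpf : ∀ y : ↥(⋃ i, M (i + (i0 + 1))),
            ((f ⟨y.1, hmemM y⟩ : ↥(⋃ j, ⋃ (_ : j ≤ k + 1), D j)) : β) ∈
              ⋃ j, ⋃ (_ : j ≤ k), (fun j => D (j + 1)) j := by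
          intro y
          obtain ⟨j, hjk, hj⟩ := mem_iUnion₂.1 (f ⟨y.1, hmemM y⟩).2
          have hflt : ((f x₀ : ↥(⋃ j, ⋃ (_ : j ≤ k + 1), D j)) : β) <
              ((f ⟨y.1, hmemM y⟩ : ↥(⋃ j, ⋃ (_ : j ≤ k + 1), D j)) : β) :=
            Subtype.coe_lt_coe.2 (f.strictMono (Subtype.coe_lt_coe.1 (hgt y)))
          have hjpos : 1 ≤ j := by
            rcases Nat.eq_zero_or_pos j with h | h
            · subst h
              exact absurd (hD 0 j0 hj0pos _ hj _ hj0) (not_lt.2 hflt.le)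
            · exact h
          refine mem_iUnion₂.2 ⟨j - 1, by omega, ?_⟩
          show _ ∈ D (j - 1 + 1)
          have : j - 1 + 1 = j := by omega
          rw [this]
          exact hj
        set c2 : ↥(⋃ i, M (i + (i0 + 1))) ↪o ↥(⋃ j, ⋃ (_ : j ≤ k), (fun j => D (j + 1)) j) :=
          OrderEmbedding.ofStrictMono (fun y => ⟨_, hpf y⟩)
            (fun a b hab => Subtype.mk_lt_mk.2 (Subtype.coe_lt_coe.2
              (f.strictMono (Subtype.mk_lt_mk.2 (Subtype.coe_lt_coe.2 hab))))) with hc2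
        obtain ⟨t, htk, hw⟩ := ihk (fun j => D (j + 1))
          (fun i j h x hx y hy => hD (i + 1) (j + 1) (by omega) x hx y hy) (tl.trans c2)
        exact ⟨t + 1, by omega, hw⟩
  | omegaStarSum M hne hH hstar hlt ih =>
    intro β _ D hD k f
    clear ih
    induction k generalizing D with
    | zero =>
      have hU : (⋃ j, ⋃ (_ : j ≤ 0), D j) = D 0 := by simp [Nat.le_zero]
      exact ⟨0, le_rfl, ⟨f.trans (OrderIso.setCongr _ _ hU).toOrderEmbedding⟩⟩
    | succ k ihk =>
      by_cases hall : ∀ x : ↥(⋃ i, M i),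
          ((f x : ↥(⋃ j, ⋃ (_ : j ≤ k + 1), D j)) : β) ∈ D (k + 1)
      · refine ⟨k + 1, le_rfl, ⟨OrderEmbedding.ofStrictMono (fun x => ⟨_, hall x⟩) ?_⟩⟩
        intro a b hab
        exact Subtype.mk_lt_mk.2 (Subtype.coe_lt_coe.2 (f.strictMono hab))
      · push_neg at hall
        obtain ⟨x₀, hx₀⟩ := hall
        obtain ⟨j0, hj0k, hj0⟩ := mem_iUnion₂.1 (f x₀).2
        have hj0le : j0 ≤ k := by
          rcases Nat.lt_or_ge j0 (k + 1) with h | h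
          · omega
          · exfalso
            have hj0e : j0 = k + 1 := by omega
            rw [hj0e] at hj0
            exact hx₀ hj0
        obtain ⟨i0, hi0⟩ := mem_iUnion.1 x₀.2
        obtain ⟨tl⟩ := tail_emb_desc M hlt hstar i0
        have hmemM : ∀ y : ↥(⋃ i, M (i + (i0 + 1))), (y : ℚ) ∈ ⋃ i, M i := by
          intro y
          obtain ⟨i, hi⟩ := mem_iUnion.1 y.2
          exact mem_iUnion.2 ⟨i + (i0 + 1), hi⟩
        have hgt : ∀ y : ↥(⋃ i, M (i + (i0 + 1))), (y : ℚ) < (x₀ : ℚ) := by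
          intro y
          obtain ⟨i, hi⟩ := mem_iUnion.1 y.2
          exact hlt i0 (i + (i0 + 1)) (by omega) _ hi0 _ hi
        have hpf : ∀ y : ↥(⋃ i, M (i + (i0 + 1))),
            ((f ⟨y.1, hmemM y⟩ : ↥(⋃ j, ⋃ (_ : j ≤ k + 1), D j)) : β) ∈
              ⋃ j, ⋃ (_ : j ≤ k), D j := by
          intro y
          obtain ⟨j, hjk, hj⟩ := mem_iUnion₂.1 (f ⟨y.1, hmemM y⟩).2
          have hflt : ((f ⟨y.1, hmemM y⟩ : ↥(⋃ j, ⋃ (_ : j ≤ k + 1), D j)) : β) <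
              ((f x₀ : ↥(⋃ j, ⋃ (_ : j ≤ k + 1), D j)) : β) :=
            Subtype.coe_lt_coe.2 (f.strictMono (Subtype.coe_lt_coe.1 (hgt y)))
          have hjle : j ≤ j0 := by
            by_contra h
            exact absurd (hD j0 j (by omega) _ hj0 _ hj) (not_lt.2 hflt.le)
          exact mem_iUnion₂.2 ⟨j, by omega, hj⟩
        set c2 : ↥(⋃ i, M (i + (i0 + 1))) ↪o ↥(⋃ j, ⋃ (_ : j ≤ k), D j) :=
          OrderEmbedding.ofStrictMono (fun y => ⟨_, hpf y⟩)
            (fun a b hab => Subtype.mk_lt_mk.2 (Subtype.coe_lt_coe.2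
              (f.strictMono (Subtype.mk_lt_mk.2 (Subtype.coe_lt_coe.2 hab))))) with hc2
        obtain ⟨t, htk, hw⟩ := ihk D hD (tl.trans c2)
        exact ⟨t, by omega, hw⟩

end InHLemmas
lemma InH.no_double : ∀ {M : Set ℚ}, InH M →
    ¬ ∃ (f g : ↥M ↪o ↥M), ∀ x y, f x < g y := by
  intro M hM
  induction hM with
  | singleton q =>
    rintro ⟨f, g, h⟩
    have h1 := h ⟨q, rfl⟩ ⟨q, rfl⟩
    have e1 : ((f ⟨q, rfl⟩ : ↥({q} : Set ℚ)) : ℚ) = q := (f ⟨q, rfl⟩).2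
    have e2 : ((g ⟨q, rfl⟩ : ↥({q} : Set ℚ)) : ℚ) = q := (g ⟨q, rfl⟩).2
    have : f ⟨q, rfl⟩ = g ⟨q, rfl⟩ := Subtype.ext (e1.trans e2.symm)
    rw [this] at h1
    exact lt_irrefl _ h1
  | iso hA e ih =>
    rintro ⟨f, g, h⟩
    obtain ⟨e'⟩ := e
    refine ih ⟨e'.toOrderEmbedding.trans (f.trans e'.symm.toOrderEmbedding),
      e'.toOrderEmbedding.trans (g.trans e'.symm.toOrderEmbedding), ?_⟩
    intro x y
    exact e'.symm.strictMono (h (e' x) (e' y))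
  | omegaSum M hne hH hstar hlt ih =>
    rintro ⟨f, g, h⟩
    have hMInH : InH (⋃ i, M i) := InH.omegaSum M hne hH hstar hlt
    obtain ⟨q0, hq0⟩ := hne 0
    set pt : ↥(⋃ i, M i) := ⟨q0, mem_iUnion.2 ⟨0, hq0⟩⟩ with hpt
    obtain ⟨kk, hkk⟩ := mem_iUnion.1 (g pt).2
    have hpf : ∀ x : ↥(⋃ i, M i), ((f x : ↥(⋃ i, M i)) : ℚ) ∈ ⋃ j, ⋃ (_ : j ≤ kk), M j := by
      intro x
      obtain ⟨jx, hjx⟩ := mem_iUnion.1 (f x).2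
      have hlt1 : ((f x : ↥(⋃ i, M i)) : ℚ) < ((g pt : ↥(⋃ i, M i)) : ℚ) :=
        Subtype.coe_lt_coe.2 (h x pt)
      have hjle : jx ≤ kk := by
        by_contra hc
        exact absurd (hlt kk jx (by omega) _ hkk _ hjx) (not_lt.2 hlt1.le)
      exact mem_iUnion₂.2 ⟨jx, hjle, hjx⟩
    set f1 : ↥(⋃ i, M i) ↪o ↥(⋃ j, ⋃ (_ : j ≤ kk), M j) :=
      OrderEmbedding.ofStrictMono (fun x => ⟨_, hpf x⟩)
        (fun a b hab => Subtype.mk_lt_mk.2 (Subtype.coe_lt_coe.2 (f.strictMono hab))) with hf1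
    obtain ⟨t, htk, ⟨w⟩⟩ := hMInH.embed_union_le M hlt kk f1
    obtain ⟨a, ha⟩ := (hstar t).nonempty
    obtain ⟨b, hb, hab⟩ := (hstar t).exists_gt a
    obtain ⟨ea⟩ := ha
    obtain ⟨eb⟩ := hb
    refine ih t ⟨(ea.trans (inclEmb (subset_iUnion M a))).trans w,
      (eb.trans (inclEmb (subset_iUnion M b))).trans w, ?_⟩
    intro x y
    refine w.strictMono (Subtype.mk_lt_mk.2 ?_)
    exact hlt a b hab _ (ea x).2 _ (eb y).2
  | omegaStarSum M hne hH hstar hlt ih =>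
    rintro ⟨f, g, h⟩
    have hMInH : InH (⋃ i, M i) := InH.omegaStarSum M hne hH hstar hlt
    obtain ⟨q0, hq0⟩ := hne 0
    set pt : ↥(⋃ i, M i) := ⟨q0, mem_iUnion.2 ⟨0, hq0⟩⟩ with hpt
    obtain ⟨kk, hkk⟩ := mem_iUnion.1 (f pt).2
    classical
    set D : ℕ → Set ℚ := fun s => if s ≤ kk then M (kk - s) else ∅ with hD
    have hDasc : ∀ i j, i < j → ∀ x ∈ D i, ∀ y ∈ D j, x < y := by
      intro i j hij x hx y hy
      by_cases hj : j ≤ kk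
      · have hi : i ≤ kk := by omega
        rw [hD] at hx hy
        simp only [if_pos hi] at hx
        simp only [if_pos hj] at hy
        exact hlt (kk - j) (kk - i) (by omega) _ hy _ hx
      · rw [hD] at hy; simp only [if_neg hj] at hy; exact absurd hy (notMem_empty y)
    have hpf : ∀ x : ↥(⋃ i, M i), ((g x : ↥(⋃ i, M i)) : ℚ) ∈ ⋃ j, ⋃ (_ : j ≤ kk), D j := by
      intro x
      obtain ⟨jx, hjx⟩ := mem_iUnion.1 (g x).2
      have hlt1 : ((f pt : ↥(⋃ i, M i)) : ℚ) < ((g x : ↥(⋃ i, M i)) : ℚ) :=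
        Subtype.coe_lt_coe.2 (h pt x)
      have hjle : jx ≤ kk := by
        by_contra hc
        exact absurd (hlt kk jx (by omega) _ hkk _ hjx) (not_lt.2 hlt1.le)
      refine mem_iUnion₂.2 ⟨kk - jx, by omega, ?_⟩
      rw [hD]
      simp only [if_pos (show kk - jx ≤ kk by omega)]
      have : kk - (kk - jx) = jx := by omega
      rw [this]
      exact hjx
    set g1 : ↥(⋃ i, M i) ↪o ↥(⋃ j, ⋃ (_ : j ≤ kk), D j) :=
      OrderEmbedding.ofStrictMono (fun x => ⟨_, hpf x⟩)
        (fun a b hab => Subtype.mk_lt_mk.2 (Subtype.coe_lt_coe.2 (g.strictMono hab))) with hg1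
    obtain ⟨t, htk, ⟨w0⟩⟩ := hMInH.embed_union_le D hDasc kk g1
    have hDt : D t = M (kk - t) := by rw [hD]; simp only [if_pos htk]
    set w : ↥(⋃ i, M i) ↪o ↥(M (kk - t)) :=
      w0.trans (OrderIso.setCongr _ _ hDt).toOrderEmbedding with hw
    obtain ⟨a, ha⟩ := (hstar (kk - t)).nonempty
    obtain ⟨b, hb, hab⟩ := (hstar (kk - t)).exists_gt a
    obtain ⟨ea⟩ := ha
    obtain ⟨eb⟩ := hb
    refine ih (kk - t) ⟨(eb.trans (inclEmb (subset_iUnion M b))).trans w,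
      (ea.trans (inclEmb (subset_iUnion M a))).trans w, ?_⟩
    intro x y
    refine w.strictMono (Subtype.mk_lt_mk.2 ?_)
    exact hlt a b hab _ (ea y).2 _ (eb x).2
section SumInH

variable {α : Type*} [LinearOrder α] [Countable α]

lemma setInH_iUnion_asc (A : ℕ → Set α) (hne : ∀ i, (A i).Nonempty)
    (hH : ∀ i, SetInH (A i))
    (hstar : ∀ i, {j | Nonempty (↥(A i) ↪o ↥(A j))}.Infinite)
    (hlt : ∀ i j, i < j → ∀ x ∈ A i, ∀ y ∈ A j, x < y) :
    SetInH (⋃ i, A i) := by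
  obtain ⟨E⟩ : Nonempty (↥(⋃ i, A i) ↪o ℚ) := Order.embedding_from_countable_to_dense _ _
  set F : ∀ i, ↥(A i) → ℚ := fun i x => E ⟨x.1, mem_iUnion.2 ⟨i, x.2⟩⟩ with hF
  have hFmono : ∀ i, StrictMono (F i) := by
    intro i x y hxy
    exact E.strictMono (Subtype.mk_lt_mk.2 (Subtype.coe_lt_coe.2 hxy))
  set N : ℕ → Set ℚ := fun i => Set.range (F i) with hN
  have isoN : ∀ i, ↥(A i) ≃o ↥(N i) := fun i => StrictMono.orderIso (F i) (hFmono i)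
  have hInHN : ∀ i, InH (N i) := by
    intro i
    obtain ⟨W, hW, ⟨ι⟩⟩ := hH i
    exact InH.iso hW ⟨ι.symm.trans (isoN i)⟩
  have hneN : ∀ i, (N i).Nonempty := by
    intro i
    obtain ⟨x, hx⟩ := hne i
    exact ⟨F i ⟨x, hx⟩, mem_range_self _⟩
  have hltN : ∀ i j, i < j → ∀ x ∈ N i, ∀ y ∈ N j, x < y := by
    intro i j hij x hx y hy
    obtain ⟨a, rfl⟩ := hx
    obtain ⟨b, rfl⟩ := hy
    exact E.strictMono (Subtype.mk_lt_mk.2 (hlt i j hij _ a.2 _ b.2))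
  have hstarN : ∀ i, {j | Nonempty (↥(N i) ↪o ↥(N j))}.Infinite := by
    intro i
    refine (hstar i).mono ?_
    rintro j ⟨e⟩
    exact ⟨((isoN i).symm.toOrderEmbedding.trans e).trans (isoN j).toOrderEmbedding⟩
  have hInH : InH (⋃ i, N i) := InH.omegaSum N hneN hInHN hstarN hltN
  have hreq : Set.range (fun x : ↥(⋃ i, A i) => E x) = ⋃ i, N i := by
    ext q
    constructor
    · rintro ⟨x, rfl⟩
      obtain ⟨i, hi⟩ := mem_iUnion.1 x.2
      refine mem_iUnion.2 ⟨i, ⟨⟨x.1, hi⟩, ?_⟩⟩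
      rw [hF]
    · rintro hq
      obtain ⟨i, hi⟩ := mem_iUnion.1 hq
      obtain ⟨a, rfl⟩ := hi
      exact ⟨⟨a.1, mem_iUnion.2 ⟨i, a.2⟩⟩, rfl⟩
  refine ⟨⋃ i, N i, hInH, ⟨?_⟩⟩
  exact (StrictMono.orderIso (fun x : ↥(⋃ i, A i) => E x) (fun x y hxy => E.strictMono hxy)).trans
    (OrderIso.setCongr _ _ hreq)

lemma setInH_iUnion_desc (A : ℕ → Set α) (hne : ∀ i, (A i).Nonempty)
    (hH : ∀ i, SetInH (A i))
    (hstar : ∀ i, {j | Nonempty (↥(A i) ↪o ↥(A j))}.Infinite)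
    (hlt : ∀ i j, i < j → ∀ x ∈ A i, ∀ y ∈ A j, y < x) :
    SetInH (⋃ i, A i) := by
  obtain ⟨E⟩ : Nonempty (↥(⋃ i, A i) ↪o ℚ) := Order.embedding_from_countable_to_dense _ _
  set F : ∀ i, ↥(A i) → ℚ := fun i x => E ⟨x.1, mem_iUnion.2 ⟨i, x.2⟩⟩ with hF
  have hFmono : ∀ i, StrictMono (F i) := by
    intro i x y hxy
    exact E.strictMono (Subtype.mk_lt_mk.2 (Subtype.coe_lt_coe.2 hxy))
  set N : ℕ → Set ℚ := fun i => Set.range (F i) with hN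
  have isoN : ∀ i, ↥(A i) ≃o ↥(N i) := fun i => StrictMono.orderIso (F i) (hFmono i)
  have hInHN : ∀ i, InH (N i) := by
    intro i
    obtain ⟨W, hW, ⟨ι⟩⟩ := hH i
    exact InH.iso hW ⟨ι.symm.trans (isoN i)⟩
  have hneN : ∀ i, (N i).Nonempty := by
    intro i
    obtain ⟨x, hx⟩ := hne i
    exact ⟨F i ⟨x, hx⟩, mem_range_self _⟩
  have hltN : ∀ i j, i < j → ∀ x ∈ N i, ∀ y ∈ N j, y < x := by
    intro i j hij x hx y hy
    obtain ⟨a, rfl⟩ := hx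
    obtain ⟨b, rfl⟩ := hy
    exact E.strictMono (Subtype.mk_lt_mk.2 (hlt i j hij _ a.2 _ b.2))
  have hstarN : ∀ i, {j | Nonempty (↥(N i) ↪o ↥(N j))}.Infinite := by
    intro i
    refine (hstar i).mono ?_
    rintro j ⟨e⟩
    exact ⟨((isoN i).symm.toOrderEmbedding.trans e).trans (isoN j).toOrderEmbedding⟩
  have hInH : InH (⋃ i, N i) := InH.omegaStarSum N hneN hInHN hstarN hltN
  have hreq : Set.range (fun x : ↥(⋃ i, A i) => E x) = ⋃ i, N i := by
    ext q
    constructor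
    · rintro ⟨x, rfl⟩
      obtain ⟨i, hi⟩ := mem_iUnion.1 x.2
      refine mem_iUnion.2 ⟨i, ⟨⟨x.1, hi⟩, ?_⟩⟩
      rw [hF]
    · rintro hq
      obtain ⟨i, hi⟩ := mem_iUnion.1 hq
      obtain ⟨a, rfl⟩ := hi
      exact ⟨⟨a.1, mem_iUnion.2 ⟨i, a.2⟩⟩, rfl⟩
  refine ⟨⋃ i, N i, hInH, ⟨?_⟩⟩
  exact (StrictMono.orderIso (fun x : ↥(⋃ i, A i) => E x) (fun x y hxy => E.strictMono hxy)).trans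
    (OrderIso.setCongr _ _ hreq)

lemma typeInH_of_univ {L : Type*} [LinearOrder L] (h : SetInH (Set.univ : Set L)) :
    TypeInH L := by
  obtain ⟨M, hM, ⟨ι⟩⟩ := h
  exact ⟨M, hM, ⟨(OrderIso.Set.univ (α := L)).symm.trans ι⟩⟩

end SumInH
/-- ω*-sum plus ω-sum: characterization of the subsets of `L`
containing a copy of `L`. -/
theorem stmt16 {L : Type*} [LinearOrder L] [Countable L]
    (P0 P1 : Set L) (hcover : P0 ∪ P1 = univ) (hdisj : Disjoint P0 P1)
    (hlt : ∀ x ∈ P0, ∀ y ∈ P1, x < y)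
    (Li0 Li1 : ℕ → Set L)
    (h0 : IsOmegaStarSumH P0 Li0) (h1 : IsOmegaSumH P1 Li1)
    (hnH : ¬ TypeInH L) (A : Set L) :
    (∃ C ∈ Copies L, C ⊆ A) ↔
      ∀ i m : ℕ, ∃ K : Finset ℕ, (∀ j ∈ K, m ≤ j) ∧
        Nonempty (↥(Li0 i) ↪o ↥(A ∩ ⋃ j ∈ K, Li0 j)) ∧
        Nonempty (↥(Li1 i) ↪o ↥(A ∩ ⋃ j ∈ K, Li1 j)) := by
  classical
  have hmemP : ∀ x : L, x ∈ P0 ∨ x ∈ P1 := by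
    intro x
    have : x ∈ P0 ∪ P1 := by rw [hcover]; exact mem_univ x
    exact this
  have hdisj' : ∀ x : L, x ∈ P0 → x ∈ P1 → False := fun x h0' h1' =>
    Set.disjoint_left.1 hdisj h0' h1'
  have hP0down : ∀ {z z' : L}, z ∈ P0 → z' ≤ z → z' ∈ P0 := by
    intro z z' hz hle
    rcases hmemP z' with h | h
    · exact h
    · exact absurd (hlt z hz z' h) (not_lt.2 hle)
  have hP1up : ∀ {z z' : L}, z ∈ P1 → z ≤ z' → z' ∈ P1 := by
    intro z z' hz hle
    rcases hmemP z' with h | h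
    · exact absurd (hlt z' h z hz) (not_lt.2 hle)
    · exact h
  have hLi0sub : ∀ n, Li0 n ⊆ P0 := by
    intro n
    rw [← h0.union]
    exact subset_iUnion Li0 n
  have hLi1sub : ∀ n, Li1 n ⊆ P1 := by
    intro n
    rw [← h1.union]
    exact subset_iUnion Li1 n
  constructor
  · -- forward direction
    rintro ⟨C, hCcop, hCA⟩ i m
    obtain ⟨γ⟩ := hCcop
    set g : L ≃o ↥C := γ.symm with hgdef
    set G : L → L := fun x => ((g x : ↥C) : L) with hG
    have hGmono : ∀ {x y : L}, x < y → G x < G y := by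
      intro x y hxy
      exact Subtype.coe_lt_coe.2 (g.strictMono hxy)
    have hGC : ∀ x, G x ∈ C := fun x => (g x).2
    have hsuccInf : ∀ s : Set ℕ, s.Infinite → ((fun n => n + 1) '' s).Infinite :=
      fun s hs => hs.image (fun a _ b _ h => by simpa using h)
    by_contra hgoal
    have hcomb : ¬ ((∃ K : Finset ℕ, (∀ j ∈ K, m ≤ j) ∧
          Nonempty (↥(Li0 i) ↪o ↥(C ∩ ⋃ j ∈ K, Li0 j))) ∧
        (∃ K : Finset ℕ, (∀ j ∈ K, m ≤ j) ∧
          Nonempty (↥(Li1 i) ↪o ↥(C ∩ ⋃ j ∈ K, Li1 j)))) := by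
      rintro ⟨⟨K₀, hb₀, ⟨w₀⟩⟩, ⟨K₁, hb₁, ⟨w₁⟩⟩⟩
      have hsub0 : C ∩ ⋃ j ∈ K₀, Li0 j ⊆ A ∩ ⋃ j ∈ K₀ ∪ K₁, Li0 j := by
        rintro z ⟨hz1, hz2⟩
        obtain ⟨j, hj, hmem⟩ := mem_iUnion₂.1 hz2
        exact ⟨hCA hz1, mem_iUnion₂.2 ⟨j, Finset.mem_union_left _ hj, hmem⟩⟩
      have hsub1 : C ∩ ⋃ j ∈ K₁, Li1 j ⊆ A ∩ ⋃ j ∈ K₀ ∪ K₁, Li1 j := by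
        rintro z ⟨hz1, hz2⟩
        obtain ⟨j, hj, hmem⟩ := mem_iUnion₂.1 hz2
        exact ⟨hCA hz1, mem_iUnion₂.2 ⟨j, Finset.mem_union_right _ hj, hmem⟩⟩
      refine hgoal ⟨K₀ ∪ K₁, ?_, ⟨w₀.trans (inclEmb hsub0)⟩, ⟨w₁.trans (inclEmb hsub1)⟩⟩
      intro j hj
      rcases Finset.mem_union.1 hj with h | h
      · exact hb₀ j h
      · exact hb₁ j h
    rcases not_and_or.1 hcomb with hfail | hfail
    · -- side 0 (the ω*-side) fails
      have fail0 : ∀ K : Finset ℕ, (∀ j ∈ K, m ≤ j) →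
          ¬ Nonempty (↥(Li0 i) ↪o ↥(C ∩ ⋃ j ∈ K, Li0 j)) := fun K hbnd hN => hfail ⟨K, hbnd, hN⟩
      have hS0closed : ∀ {z z' : L}, (z ∈ P1 ∨ ∃ j, j < m ∧ z ∈ Li0 j) → z ≤ z' →
          (z' ∈ P1 ∨ ∃ j, j < m ∧ z' ∈ Li0 j) := by
        rintro z z' (hz | ⟨j, hjm, hzj⟩) hle
        · exact Or.inl (hP1up hz hle)
        · rcases hmemP z' with h | h
          · right
            have h' := h; rw [← h0.union] at h'
            obtain ⟨j', hj'⟩ := mem_iUnion.1 h'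
            refine ⟨j', ?_, hj'⟩
            have hj'le : j' ≤ j := by
              by_contra hc
              exact absurd (h0.mono j j' (by omega) z hzj z' hj') (not_lt.2 hle)
            omega
          · exact Or.inl h
      have hti0 : ∀ i', Nonempty (↥(Li0 i) ↪o ↥(Li0 i')) →
          ∃ y ∈ Li0 i', (G y ∈ P1 ∨ ∃ j, j < m ∧ G y ∈ Li0 j) := by
        intro i' hi'
        by_contra hcon
        push_neg at hcon
        have hidx : ∀ y ∈ Li0 i', ∃ jy, m ≤ jy ∧ G y ∈ Li0 jy := by
          intro y hy
          obtain ⟨hnP1, hnlow⟩ := hcon y hy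
          have hGy : G y ∈ P0 := (hmemP (G y)).resolve_right hnP1
          rw [← h0.union] at hGy
          obtain ⟨jy, hjy⟩ := mem_iUnion.1 hGy
          refine ⟨jy, ?_, hjy⟩
          by_contra hc
          exact hnlow jy (by omega) hjy
        obtain ⟨w, hw⟩ := h0.nonemp (i' + 1)
        rcases hmemP (G w) with hGw | hGw
        · -- G w ∈ P0, with index jw
          have hGw' := hGw; rw [← h0.union] at hGw'
          obtain ⟨jw, hjw⟩ := mem_iUnion.1 hGw'
          obtain ⟨e'⟩ := hi'
          have hmemF : ∀ y : ↥(Li0 i'), G y.1 ∈ C ∩ ⋃ j ∈ Finset.Icc m jw, Li0 j := by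
            intro y
            obtain ⟨jy, hjym, hjy⟩ := hidx y.1 y.2
            have hwy : w < y.1 := h0.mono i' (i' + 1) (by omega) _ y.2 _ hw
            have hGwy : G w < G y.1 := hGmono hwy
            have hjyle : jy ≤ jw := by
              by_contra hc
              exact absurd (h0.mono jw jy (by omega) _ hjw _ hjy) (not_lt.2 hGwy.le)
            exact ⟨hGC _, mem_iUnion₂.2 ⟨jy, Finset.mem_Icc.2 ⟨hjym, hjyle⟩, hjy⟩⟩
          refine fail0 (Finset.Icc m jw) (fun j hj => (Finset.mem_Icc.1 hj).1)
            ⟨e'.trans (OrderEmbedding.ofStrictMono (fun y => ⟨G y.1, hmemF y⟩)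
              (fun a b hab => Subtype.mk_lt_mk.2 (hGmono (Subtype.coe_lt_coe.2 hab))))⟩
        · -- G w ∈ P1: contradiction with any y above w mapping into P0
          obtain ⟨y, hy⟩ := h0.nonemp i'
          obtain ⟨jy, hjym, hjy⟩ := hidx y hy
          have hwy : w < y := h0.mono i' (i' + 1) (by omega) _ hy _ hw
          have h1' : G w < G y := hGmono hwy
          have h2' : G y < G w := hlt _ (hLi0sub jy hjy) _ hGw
          exact absurd h1' (not_lt.2 h2'.le)
      have hS0 : ∀ x : L, G x ∈ P1 ∨ ∃ j, j < m ∧ G x ∈ Li0 j := by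
        have hstep : ∀ n (x : L), x ∈ Li0 n → (G x ∈ P1 ∨ ∃ j, j < m ∧ G x ∈ Li0 j) := by
          intro n x hx
          obtain ⟨i', hi'star, hi'gt⟩ := (h0.star i).exists_gt n
          obtain ⟨y, hy, hGy⟩ := hti0 i' hi'star
          exact hS0closed hGy (hGmono (h0.mono n i' hi'gt x hx y hy)).le
        intro x
        rcases hmemP x with hx | hx
        · have hx' := hx; rw [← h0.union] at hx'
          obtain ⟨n, hn⟩ := mem_iUnion.1 hx'
          exact hstep n x hn
        · obtain ⟨y, hy⟩ := h0.nonemp 0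
          have hyx : y < x := hlt y (hLi0sub 0 hy) x hx
          exact hS0closed (hstep 0 y hy) (hGmono hyx).le
      have hP0H : SetInH P0 := by
        have := setInH_iUnion_desc Li0 h0.nonemp h0.inH h0.star h0.mono
        rwa [h0.union] at this
      obtain ⟨M₀, hM₀, ⟨ι0⟩⟩ := hP0H
      by_cases hball : ∀ x ∈ P0, G x ∈ P1
      · -- image of P0 lies in P1 : L turns out to be in ℋ, contradiction with hnH
        obtain ⟨x1, hx1⟩ := h0.nonemp 0
        have hGx1 : G x1 ∈ P1 := hball x1 (hLi0sub 0 hx1)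
        have hGx1' := hGx1; rw [← h1.union] at hGx1'
        obtain ⟨j0, hj0⟩ := mem_iUnion.1 hGx1'
        obtain ⟨tl⟩ := tail_emb_desc Li0 h0.mono h0.star 0
        have hmemB : ∀ y : ↥(⋃ i', Li0 (i' + (0 + 1))),
            G y.1 ∈ ⋃ j, ⋃ (_ : j ≤ j0), (fun j => C ∩ Li1 j) j := by
          intro y
          obtain ⟨iy, hiy⟩ := mem_iUnion.1 y.2
          have hyx1 : y.1 < x1 := h0.mono 0 (iy + (0 + 1)) (by omega) _ hx1 _ hiy
          have hGy : G y.1 ∈ P1 := hball _ (hLi0sub _ hiy)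
          have hGy' := hGy; rw [← h1.union] at hGy'
          obtain ⟨jy, hjy⟩ := mem_iUnion.1 hGy'
          have hjyle : jy ≤ j0 := by
            by_contra hc
            exact absurd (h1.mono j0 jy (by omega) _ hj0 _ hjy) (not_lt.2 (hGmono hyx1).le)
          exact mem_iUnion₂.2 ⟨jy, hjyle, ⟨hGC _, hjy⟩⟩
        set c2 : ↥(⋃ i', Li0 (i' + (0 + 1))) ↪o ↥(⋃ j, ⋃ (_ : j ≤ j0), (fun j => C ∩ Li1 j) j) :=
          OrderEmbedding.ofStrictMono (fun y => ⟨G y.1, hmemB y⟩)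
            (fun a b hab => Subtype.mk_lt_mk.2 (hGmono (Subtype.coe_lt_coe.2 hab))) with hc2
        have hBasc : ∀ a b, a < b → ∀ x ∈ (fun j => C ∩ Li1 j) a, ∀ y ∈ (fun j => C ∩ Li1 j) b, x < y :=
          fun a b hab x hx y hy => h1.mono a b hab _ hx.2 _ hy.2
        obtain ⟨t, htk, ⟨w0⟩⟩ := hM₀.embed_union_le (fun j => C ∩ Li1 j) hBasc j0
          (((ι0.symm.trans (OrderIso.setCongr P0 _ h0.union.symm)).toOrderEmbedding.trans tl).trans c2)
        set w : ↥M₀ ↪o ↥(Li1 t) := w0.trans (inclEmb inter_subset_right) with hwdef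
        set embP0 : ↥P0 ↪o ↥(Li1 t) := ι0.toOrderEmbedding.trans w with hembP0
        set Q : ℕ → Set L := fun n => Nat.casesOn n P0 (fun k => Li1 k) with hQ
        have hQne : ∀ n, (Q n).Nonempty := by
          intro n
          cases n with
          | zero => exact ⟨x1, hLi0sub 0 hx1⟩
          | succ k => exact h1.nonemp k
        have hQH : ∀ n, SetInH (Q n) := by
          intro n
          cases n with
          | zero => exact ⟨M₀, hM₀, ⟨ι0⟩⟩
          | succ k => exact h1.inH k
        have hQstar : ∀ n, {j | Nonempty (↥(Q n) ↪o ↥(Q j))}.Infinite := by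
          intro n
          cases n with
          | zero =>
            refine (hsuccInf _ (h1.star t)).mono ?_
            rintro _ ⟨s, hs, rfl⟩
            obtain ⟨es⟩ := hs
            exact ⟨embP0.trans es⟩
          | succ k =>
            refine (hsuccInf _ (h1.star k)).mono ?_
            rintro _ ⟨s, hs, rfl⟩
            obtain ⟨es⟩ := hs
            exact ⟨es⟩
        have hQlt : ∀ a b, a < b → ∀ x ∈ Q a, ∀ y ∈ Q b, x < y := by
          intro a b hab x hx y hy
          cases a with
          | zero =>
            cases b with
            | zero => omega
            | succ k => exact hlt x hx y (hLi1sub k hy)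
          | succ k =>
            cases b with
            | zero => omega
            | succ k' => exact h1.mono k k' (by omega) x hx y hy
        have hQuniv : (⋃ n, Q n) = univ := by
          ext x
          simp only [mem_univ, iff_true]
          rcases hmemP x with hx | hx
          · exact mem_iUnion.2 ⟨0, hx⟩
          · have hx' := hx; rw [← h1.union] at hx'
            obtain ⟨k, hk⟩ := mem_iUnion.1 hx'
            exact mem_iUnion.2 ⟨k + 1, hk⟩
        have hfin : SetInH (⋃ n, Q n) := setInH_iUnion_asc Q hQne hQH hQstar hQlt
        rw [hQuniv] at hfin
        exact hnH (typeInH_of_univ hfin)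
      · -- some point of P0 maps into P0 : a double copy inside one block, contradiction
        push_neg at hball
        obtain ⟨xh, hxhP0, hGxhnP1⟩ := hball
        obtain ⟨jhm, hjhm, hGxhmem⟩ := (hS0 xh).resolve_left hGxhnP1
        have hxh' := hxhP0; rw [← h0.union] at hxh'
        obtain ⟨jh, hjh⟩ := mem_iUnion.1 hxh'
        obtain ⟨tl⟩ := tail_emb_desc Li0 h0.mono h0.star jh
        set B' : ℕ → Set L := fun s => if s ≤ m - 1 then C ∩ Li0 (m - 1 - s) else ∅ with hB'
        have hB'asc : ∀ s s', s < s' → ∀ x ∈ B' s, ∀ y ∈ B' s', x < y := by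
          intro s s' hss' x hx y hy
          by_cases hs' : s' ≤ m - 1
          · have hs : s ≤ m - 1 := by omega
            rw [hB'] at hx hy
            simp only [if_pos hs] at hx
            simp only [if_pos hs'] at hy
            exact h0.mono (m - 1 - s') (m - 1 - s) (by omega) _ hy.2 _ hx.2
          · rw [hB'] at hy; simp only [if_neg hs'] at hy; exact absurd hy (notMem_empty _)
        have hmemB : ∀ y : ↥(⋃ i', Li0 (i' + (jh + 1))),
            G y.1 ∈ ⋃ s, ⋃ (_ : s ≤ m - 1), B' s := by
          intro y
          obtain ⟨iy, hiy⟩ := mem_iUnion.1 y.2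
          have hyxh : y.1 < xh := h0.mono jh (iy + (jh + 1)) (by omega) _ hjh _ hiy
          have hGyP0 : G y.1 ∈ P0 := hP0down (hLi0sub jhm hGxhmem) (hGmono hyxh).le
          rcases hS0 y.1 with h | ⟨jy, hjym, hjy⟩
          · exact absurd h (fun hc => hdisj' _ hGyP0 hc)
          · refine mem_iUnion₂.2 ⟨m - 1 - jy, by omega, ?_⟩
            rw [hB']
            simp only [if_pos (show m - 1 - jy ≤ m - 1 by omega)]
            have hval : m - 1 - (m - 1 - jy) = jy := by omega
            rw [hval]
            exact ⟨hGC _, hjy⟩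
        set c2 : ↥(⋃ i', Li0 (i' + (jh + 1))) ↪o ↥(⋃ s, ⋃ (_ : s ≤ m - 1), B' s) :=
          OrderEmbedding.ofStrictMono (fun y => ⟨G y.1, hmemB y⟩)
            (fun a b hab => Subtype.mk_lt_mk.2 (hGmono (Subtype.coe_lt_coe.2 hab))) with hc2
        obtain ⟨t, htk, ⟨w0⟩⟩ := hM₀.embed_union_le B' hB'asc (m - 1)
          (((ι0.symm.trans (OrderIso.setCongr P0 _ h0.union.symm)).toOrderEmbedding.trans tl).trans c2)
        have hBt : B' t = C ∩ Li0 (m - 1 - t) := by rw [hB']; simp only [if_pos htk]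
        set w : ↥M₀ ↪o ↥(Li0 (m - 1 - t)) :=
          (w0.trans (OrderIso.setCongr _ _ hBt).toOrderEmbedding).trans
            (inclEmb inter_subset_right) with hwdef
        obtain ⟨a, ha⟩ := (h0.star (m - 1 - t)).nonempty
        obtain ⟨b, hbmem, hab⟩ := (h0.star (m - 1 - t)).exists_gt a
        obtain ⟨ea⟩ := ha
        obtain ⟨eb⟩ := hbmem
        set toM₀ : ↥(⋃ i', Li0 i') ↪o ↥M₀ :=
          (OrderIso.setCongr _ P0 h0.union).toOrderEmbedding.trans ι0.toOrderEmbedding with htoM₀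
        refine hM₀.no_double ⟨(w.trans (eb.trans (inclEmb (subset_iUnion Li0 b)))).trans toM₀,
          (w.trans (ea.trans (inclEmb (subset_iUnion Li0 a)))).trans toM₀, ?_⟩
        intro x y
        refine toM₀.strictMono (Subtype.mk_lt_mk.2 ?_)
        exact h0.mono a b hab _ (ea (w y)).2 _ (eb (w x)).2
    · -- side 1 (the ω-side) fails
      have fail1 : ∀ K : Finset ℕ, (∀ j ∈ K, m ≤ j) →
          ¬ Nonempty (↥(Li1 i) ↪o ↥(C ∩ ⋃ j ∈ K, Li1 j)) := fun K hbnd hN => hfail ⟨K, hbnd, hN⟩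
      have hS1closed : ∀ {z z' : L}, (z ∈ P0 ∨ ∃ j, j < m ∧ z ∈ Li1 j) → z' ≤ z →
          (z' ∈ P0 ∨ ∃ j, j < m ∧ z' ∈ Li1 j) := by
        rintro z z' (hz | ⟨j, hjm, hzj⟩) hle
        · exact Or.inl (hP0down hz hle)
        · rcases hmemP z' with h | h
          · exact Or.inl h
          · right
            have h' := h; rw [← h1.union] at h'
            obtain ⟨j', hj'⟩ := mem_iUnion.1 h'
            refine ⟨j', ?_, hj'⟩
            have hj'le : j' ≤ j := by
              by_contra hc
              exact absurd (h1.mono j j' (by omega) z hzj z' hj') (not_lt.2 hle)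
            omega
      have hti1 : ∀ i', Nonempty (↥(Li1 i) ↪o ↥(Li1 i')) →
          ∃ y ∈ Li1 i', (G y ∈ P0 ∨ ∃ j, j < m ∧ G y ∈ Li1 j) := by
        intro i' hi'
        by_contra hcon
        push_neg at hcon
        have hidx : ∀ y ∈ Li1 i', ∃ jy, m ≤ jy ∧ G y ∈ Li1 jy := by
          intro y hy
          obtain ⟨hnP0, hnlow⟩ := hcon y hy
          have hGy : G y ∈ P1 := (hmemP (G y)).resolve_left hnP0
          rw [← h1.union] at hGy
          obtain ⟨jy, hjy⟩ := mem_iUnion.1 hGy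
          refine ⟨jy, ?_, hjy⟩
          by_contra hc
          exact hnlow jy (by omega) hjy
        obtain ⟨w, hw⟩ := h1.nonemp (i' + 1)
        rcases hmemP (G w) with hGw | hGw
        · -- G w ∈ P0: contradiction
          obtain ⟨y, hy⟩ := h1.nonemp i'
          obtain ⟨jy, hjym, hjy⟩ := hidx y hy
          have hyw : y < w := h1.mono i' (i' + 1) (by omega) _ hy _ hw
          have h1' : G y < G w := hGmono hyw
          have h2' : G w < G y := hlt _ hGw _ (hLi1sub jy hjy)
          exact absurd h1' (not_lt.2 h2'.le)
        · -- G w ∈ P1, index jw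
          have hGw' := hGw; rw [← h1.union] at hGw'
          obtain ⟨jw, hjw⟩ := mem_iUnion.1 hGw'
          obtain ⟨e'⟩ := hi'
          have hmemF : ∀ y : ↥(Li1 i'), G y.1 ∈ C ∩ ⋃ j ∈ Finset.Icc m jw, Li1 j := by
            intro y
            obtain ⟨jy, hjym, hjy⟩ := hidx y.1 y.2
            have hyw : y.1 < w := h1.mono i' (i' + 1) (by omega) _ y.2 _ hw
            have hGyw : G y.1 < G w := hGmono hyw
            have hjyle : jy ≤ jw := by
              by_contra hc
              exact absurd (h1.mono jw jy (by omega) _ hjw _ hjy) (not_lt.2 hGyw.le)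
            exact ⟨hGC _, mem_iUnion₂.2 ⟨jy, Finset.mem_Icc.2 ⟨hjym, hjyle⟩, hjy⟩⟩
          refine fail1 (Finset.Icc m jw) (fun j hj => (Finset.mem_Icc.1 hj).1)
            ⟨e'.trans (OrderEmbedding.ofStrictMono (fun y => ⟨G y.1, hmemF y⟩)
              (fun a b hab => Subtype.mk_lt_mk.2 (hGmono (Subtype.coe_lt_coe.2 hab))))⟩
      have hS1 : ∀ x : L, G x ∈ P0 ∨ ∃ j, j < m ∧ G x ∈ Li1 j := by
        have hstep : ∀ n (x : L), x ∈ Li1 n → (G x ∈ P0 ∨ ∃ j, j < m ∧ G x ∈ Li1 j) := by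
          intro n x hx
          obtain ⟨i', hi'star, hi'gt⟩ := (h1.star i).exists_gt n
          obtain ⟨y, hy, hGy⟩ := hti1 i' hi'star
          exact hS1closed hGy (hGmono (h1.mono n i' hi'gt x hx y hy)).le
        intro x
        rcases hmemP x with hx | hx
        · obtain ⟨y, hy⟩ := h1.nonemp 0
          have hxy : x < y := hlt x hx y (hLi1sub 0 hy)
          exact hS1closed (hstep 0 y hy) (hGmono hxy).le
        · have hx' := hx; rw [← h1.union] at hx'
          obtain ⟨n, hn⟩ := mem_iUnion.1 hx'
          exact hstep n x hn
      have hP1H : SetInH P1 := by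
        have := setInH_iUnion_asc Li1 h1.nonemp h1.inH h1.star h1.mono
        rwa [h1.union] at this
      obtain ⟨M₁, hM₁, ⟨ι1⟩⟩ := hP1H
      by_cases hball : ∀ x ∈ P1, G x ∈ P0
      · -- image of P1 lies in P0 : contradiction with hnH
        obtain ⟨x1, hx1⟩ := h1.nonemp 0
        have hGx1 : G x1 ∈ P0 := hball x1 (hLi1sub 0 hx1)
        have hGx1' := hGx1; rw [← h0.union] at hGx1'
        obtain ⟨j0, hj0⟩ := mem_iUnion.1 hGx1'
        obtain ⟨tl⟩ := tail_emb_asc Li1 h1.mono h1.star 0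
        set B' : ℕ → Set L := fun s => if s ≤ j0 then C ∩ Li0 (j0 - s) else ∅ with hB'
        have hB'asc : ∀ s s', s < s' → ∀ x ∈ B' s, ∀ y ∈ B' s', x < y := by
          intro s s' hss' x hx y hy
          by_cases hs' : s' ≤ j0
          · have hs : s ≤ j0 := by omega
            rw [hB'] at hx hy
            simp only [if_pos hs] at hx
            simp only [if_pos hs'] at hy
            exact h0.mono (j0 - s') (j0 - s) (by omega) _ hy.2 _ hx.2
          · rw [hB'] at hy; simp only [if_neg hs'] at hy; exact absurd hy (notMem_empty _)
        have hmemB : ∀ y : ↥(⋃ i', Li1 (i' + (0 + 1))),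
            G y.1 ∈ ⋃ s, ⋃ (_ : s ≤ j0), B' s := by
          intro y
          obtain ⟨iy, hiy⟩ := mem_iUnion.1 y.2
          have hx1y : x1 < y.1 := h1.mono 0 (iy + (0 + 1)) (by omega) _ hx1 _ hiy
          have hGy : G y.1 ∈ P0 := hball _ (hLi1sub _ hiy)
          have hGy' := hGy; rw [← h0.union] at hGy'
          obtain ⟨jy, hjy⟩ := mem_iUnion.1 hGy'
          have hjyle : jy ≤ j0 := by
            by_contra hc
            exact absurd (h0.mono j0 jy (by omega) _ hj0 _ hjy) (not_lt.2 (hGmono hx1y).le)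
          refine mem_iUnion₂.2 ⟨j0 - jy, by omega, ?_⟩
          rw [hB']
          simp only [if_pos (show j0 - jy ≤ j0 by omega)]
          have hval : j0 - (j0 - jy) = jy := by omega
          rw [hval]
          exact ⟨hGC _, hjy⟩
        set c2 : ↥(⋃ i', Li1 (i' + (0 + 1))) ↪o ↥(⋃ s, ⋃ (_ : s ≤ j0), B' s) :=
          OrderEmbedding.ofStrictMono (fun y => ⟨G y.1, hmemB y⟩)
            (fun a b hab => Subtype.mk_lt_mk.2 (hGmono (Subtype.coe_lt_coe.2 hab))) with hc2
        obtain ⟨t, htk, ⟨w0⟩⟩ := hM₁.embed_union_le B' hB'asc j0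
          (((ι1.symm.trans (OrderIso.setCongr P1 _ h1.union.symm)).toOrderEmbedding.trans tl).trans c2)
        have hBt : B' t = C ∩ Li0 (j0 - t) := by rw [hB']; simp only [if_pos htk]
        set w : ↥M₁ ↪o ↥(Li0 (j0 - t)) :=
          (w0.trans (OrderIso.setCongr _ _ hBt).toOrderEmbedding).trans
            (inclEmb inter_subset_right) with hwdef
        set embP1 : ↥P1 ↪o ↥(Li0 (j0 - t)) := ι1.toOrderEmbedding.trans w with hembP1
        set Q : ℕ → Set L := fun n => Nat.casesOn n P1 (fun k => Li0 k) with hQ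
        have hQne : ∀ n, (Q n).Nonempty := by
          intro n
          cases n with
          | zero => exact ⟨x1, hLi1sub 0 hx1⟩
          | succ k => exact h0.nonemp k
        have hQH : ∀ n, SetInH (Q n) := by
          intro n
          cases n with
          | zero => exact ⟨M₁, hM₁, ⟨ι1⟩⟩
          | succ k => exact h0.inH k
        have hQstar : ∀ n, {j | Nonempty (↥(Q n) ↪o ↥(Q j))}.Infinite := by
          intro n
          cases n with
          | zero =>
            refine (hsuccInf _ (h0.star (j0 - t))).mono ?_
            rintro _ ⟨s, hs, rfl⟩
            obtain ⟨es⟩ := hs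
            exact ⟨embP1.trans es⟩
          | succ k =>
            refine (hsuccInf _ (h0.star k)).mono ?_
            rintro _ ⟨s, hs, rfl⟩
            obtain ⟨es⟩ := hs
            exact ⟨es⟩
        have hQlt : ∀ a b, a < b → ∀ x ∈ Q a, ∀ y ∈ Q b, y < x := by
          intro a b hab x hx y hy
          cases a with
          | zero =>
            cases b with
            | zero => omega
            | succ k => exact hlt y (hLi0sub k hy) x hx
          | succ k =>
            cases b with
            | zero => omega
            | succ k' => exact h0.mono k k' (by omega) x hx y hy
        have hQuniv : (⋃ n, Q n) = univ := by
          ext x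
          simp only [mem_univ, iff_true]
          rcases hmemP x with hx | hx
          · have hx' := hx; rw [← h0.union] at hx'
            obtain ⟨k, hk⟩ := mem_iUnion.1 hx'
            exact mem_iUnion.2 ⟨k + 1, hk⟩
          · exact mem_iUnion.2 ⟨0, hx⟩
        have hfin : SetInH (⋃ n, Q n) := setInH_iUnion_desc Q hQne hQH hQstar hQlt
        rw [hQuniv] at hfin
        exact hnH (typeInH_of_univ hfin)
      · -- some point of P1 maps into P1 : double copy contradiction
        push_neg at hball
        obtain ⟨xh, hxhP1, hGxhnP0⟩ := hball
        obtain ⟨jhm, hjhm, hGxhmem⟩ := (hS1 xh).resolve_left hGxhnP0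
        have hxh' := hxhP1; rw [← h1.union] at hxh'
        obtain ⟨jh, hjh⟩ := mem_iUnion.1 hxh'
        obtain ⟨tl⟩ := tail_emb_asc Li1 h1.mono h1.star jh
        have hBasc : ∀ a b, a < b → ∀ x ∈ (fun j => C ∩ Li1 j) a, ∀ y ∈ (fun j => C ∩ Li1 j) b, x < y :=
          fun a b hab x hx y hy => h1.mono a b hab _ hx.2 _ hy.2
        have hmemB : ∀ y : ↥(⋃ i', Li1 (i' + (jh + 1))),
            G y.1 ∈ ⋃ j, ⋃ (_ : j ≤ m - 1), (fun j => C ∩ Li1 j) j := by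
          intro y
          obtain ⟨iy, hiy⟩ := mem_iUnion.1 y.2
          have hxhy : xh < y.1 := h1.mono jh (iy + (jh + 1)) (by omega) _ hjh _ hiy
          have hGyP1 : G y.1 ∈ P1 := hP1up (hLi1sub jhm hGxhmem) (hGmono hxhy).le
          rcases hS1 y.1 with h | ⟨jy, hjym, hjy⟩
          · exact absurd h (fun hc => hdisj' _ hc hGyP1)
          · exact mem_iUnion₂.2 ⟨jy, by omega, ⟨hGC _, hjy⟩⟩
        set c2 : ↥(⋃ i', Li1 (i' + (jh + 1))) ↪o ↥(⋃ j, ⋃ (_ : j ≤ m - 1), (fun j => C ∩ Li1 j) j) :=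
          OrderEmbedding.ofStrictMono (fun y => ⟨G y.1, hmemB y⟩)
            (fun a b hab => Subtype.mk_lt_mk.2 (hGmono (Subtype.coe_lt_coe.2 hab))) with hc2
        obtain ⟨t, htk, ⟨w0⟩⟩ := hM₁.embed_union_le (fun j => C ∩ Li1 j) hBasc (m - 1)
          (((ι1.symm.trans (OrderIso.setCongr P1 _ h1.union.symm)).toOrderEmbedding.trans tl).trans c2)
        set w : ↥M₁ ↪o ↥(Li1 t) := w0.trans (inclEmb inter_subset_right) with hwdef
        obtain ⟨a, ha⟩ := (h1.star t).nonempty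
        obtain ⟨b, hbmem, hab⟩ := (h1.star t).exists_gt a
        obtain ⟨ea⟩ := ha
        obtain ⟨eb⟩ := hbmem
        set toM₁ : ↥(⋃ i', Li1 i') ↪o ↥M₁ :=
          (OrderIso.setCongr _ P1 h1.union).toOrderEmbedding.trans ι1.toOrderEmbedding with htoM₁
        refine hM₁.no_double ⟨(w.trans (ea.trans (inclEmb (subset_iUnion Li1 a)))).trans toM₁,
          (w.trans (eb.trans (inclEmb (subset_iUnion Li1 b)))).trans toM₁, ?_⟩
        intro x y
        refine toM₁.strictMono (Subtype.mk_lt_mk.2 ?_)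
        exact h1.mono a b hab _ (ea (w x)).2 _ (eb (w y)).2
  · -- backward direction
    intro hR
    choose Kf hKb hK0 hK1 using hR
    set bseq : ℕ → ℕ :=
      fun n => Nat.rec 0 (fun k ih => max (ih + 1) ((Kf k ih).sup id + 1)) n with hbseq
    have hbsucc : ∀ n, bseq (n + 1) = max (bseq n + 1) ((Kf n (bseq n)).sup id + 1) :=
      fun n => rfl
    have hbmono : StrictMono bseq := strictMono_nat_of_lt_succ (by
      intro n
      rw [hbsucc]
      omega)
    set K : ℕ → Finset ℕ := fun n => Kf n (bseq n) with hK
    have hsep : ∀ n n', n < n' → ∀ j ∈ K n, ∀ j' ∈ K n', j < j' := by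
      intro n n' hnn' j hj j' hj'
      simp only [hK] at hj hj'
      have h1' : j ≤ (Kf n (bseq n)).sup id := Finset.le_sup (f := id) hj
      have h3' : bseq (n + 1) ≤ bseq n' := hbmono.monotone hnn'
      have h4' : bseq n' ≤ j' := hKb n' (bseq n') j' hj'
      rw [hbsucc] at h3'
      omega
    set ε0 : ∀ n, ↥(Li0 n) ↪o ↥(A ∩ ⋃ j ∈ K n, Li0 j) :=
      fun n => (hK0 n (bseq n)).some with hε0
    set ε1 : ∀ n, ↥(Li1 n) ↪o ↥(A ∩ ⋃ j ∈ K n, Li1 j) :=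
      fun n => (hK1 n (bseq n)).some with hε1
    have hval0 : ∀ n (a : ↥(Li0 n)), ((ε0 n a : ↥(A ∩ ⋃ j ∈ K n, Li0 j)) : L) ∈ A ∧
        ∃ j ∈ K n, ((ε0 n a : ↥(A ∩ ⋃ j ∈ K n, Li0 j)) : L) ∈ Li0 j := by
      intro n a
      obtain ⟨hA', hU⟩ := (ε0 n a).2
      obtain ⟨j, hj1, hj2⟩ := mem_iUnion₂.1 hU
      exact ⟨hA', j, hj1, hj2⟩
    have hval1 : ∀ n (a : ↥(Li1 n)), ((ε1 n a : ↥(A ∩ ⋃ j ∈ K n, Li1 j)) : L) ∈ A ∧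
        ∃ j ∈ K n, ((ε1 n a : ↥(A ∩ ⋃ j ∈ K n, Li1 j)) : L) ∈ Li1 j := by
      intro n a
      obtain ⟨hA', hU⟩ := (ε1 n a).2
      obtain ⟨j, hj1, hj2⟩ := mem_iUnion₂.1 hU
      exact ⟨hA', j, hj1, hj2⟩
    have claim00 : ∀ n (a : L) (ha : a ∈ Li0 n) n' (a' : L) (ha' : a' ∈ Li0 n'), a < a' →
        ((ε0 n ⟨a, ha⟩ : ↥(A ∩ ⋃ j ∈ K n, Li0 j)) : L) <
        ((ε0 n' ⟨a', ha'⟩ : ↥(A ∩ ⋃ j ∈ K n', Li0 j)) : L) := by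
      intro n a ha n' a' ha' haa'
      rcases lt_trichotomy n n' with h | h | h
      · exact absurd (h0.mono n n' h a ha a' ha') (not_lt.2 haa'.le)
      · subst h
        exact Subtype.coe_lt_coe.2 ((ε0 n).strictMono (Subtype.mk_lt_mk.2 haa'))
      · obtain ⟨_, jx, hjx, hvx⟩ := hval0 n ⟨a, ha⟩
        obtain ⟨_, jy, hjy, hvy⟩ := hval0 n' ⟨a', ha'⟩
        exact h0.mono jy jx (hsep n' n h jy hjy jx hjx) _ hvy _ hvx
    have claim11 : ∀ n (a : L) (ha : a ∈ Li1 n) n' (a' : L) (ha' : a' ∈ Li1 n'), a < a' →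
        ((ε1 n ⟨a, ha⟩ : ↥(A ∩ ⋃ j ∈ K n, Li1 j)) : L) <
        ((ε1 n' ⟨a', ha'⟩ : ↥(A ∩ ⋃ j ∈ K n', Li1 j)) : L) := by
      intro n a ha n' a' ha' haa'
      rcases lt_trichotomy n n' with h | h | h
      · obtain ⟨_, jx, hjx, hvx⟩ := hval1 n ⟨a, ha⟩
        obtain ⟨_, jy, hjy, hvy⟩ := hval1 n' ⟨a', ha'⟩
        exact h1.mono jx jy (hsep n n' h jx hjx jy hjy) _ hvx _ hvy
      · subst h
        exact Subtype.coe_lt_coe.2 ((ε1 n).strictMono (Subtype.mk_lt_mk.2 haa'))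
      · exact absurd (h1.mono n' n h a' ha' a ha) (not_lt.2 haa'.le)
    have claim01 : ∀ n (a : L) (ha : a ∈ Li0 n) n' (a' : L) (ha' : a' ∈ Li1 n'),
        ((ε0 n ⟨a, ha⟩ : ↥(A ∩ ⋃ j ∈ K n, Li0 j)) : L) <
        ((ε1 n' ⟨a', ha'⟩ : ↥(A ∩ ⋃ j ∈ K n', Li1 j)) : L) := by
      intro n a ha n' a' ha'
      obtain ⟨_, jx, hjx, hvx⟩ := hval0 n ⟨a, ha⟩
      obtain ⟨_, jy, hjy, hvy⟩ := hval1 n' ⟨a', ha'⟩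
      exact hlt _ (hLi0sub jx hvx) _ (hLi1sub jy hvy)
    have hmem0 : ∀ (x : L), x ∈ P0 → ∃ n, x ∈ Li0 n := by
      intro x hx
      rw [← h0.union] at hx
      exact mem_iUnion.1 hx
    have hmem1 : ∀ (x : L), x ∉ P0 → ∃ n, x ∈ Li1 n := by
      intro x hx
      have := (hmemP x).resolve_left hx
      rw [← h1.union] at this
      exact mem_iUnion.1 this
    choose i0f hi0f using hmem0
    choose i1f hi1f using hmem1
    set H : L → L := fun x =>
      if hx : x ∈ P0 then ((ε0 (i0f x hx) ⟨x, hi0f x hx⟩ : ↥(A ∩ ⋃ j ∈ K (i0f x hx), Li0 j)) : L)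
      else ((ε1 (i1f x hx) ⟨x, hi1f x hx⟩ : ↥(A ∩ ⋃ j ∈ K (i1f x hx), Li1 j)) : L) with hH
    have hHmono : StrictMono H := by
      intro x y hxy
      by_cases hx : x ∈ P0 <;> by_cases hy : y ∈ P0
      · simp only [hH, dif_pos hx, dif_pos hy]
        exact claim00 _ _ _ _ _ _ hxy
      · simp only [hH, dif_pos hx, dif_neg hy]
        exact claim01 _ _ _ _ _ _
      · exfalso
        have hxP1 : x ∈ P1 := (hmemP x).resolve_left hx
        exact absurd (hlt y hy x hxP1) (not_lt.2 hxy.le)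
      · simp only [hH, dif_neg hx, dif_neg hy]
        exact claim11 _ _ _ _ _ _ hxy
    refine ⟨Set.range H, ⟨(StrictMono.orderIso H hHmono).symm⟩, ?_⟩
    rintro _ ⟨x, rfl⟩
    by_cases hx : x ∈ P0
    · simp only [hH, dif_pos hx]
      exact (hval0 _ _).1
    · simp only [hH, dif_neg hx]
      exact (hval1 _ _).1
end

section
/- Let L be a countable linear order partitioned into an initial convex part L⁰ and a final convex part L¹ (every element of L⁰ precedes every element of L¹), where the induced order on L⁰ is the ω*-sum of a sequence ⟨L⁰_i : i∈ω⟩ of members of ℋ satisfying condition (*), the induced order on L¹ is the ω-sum of a sequence ⟨L¹_i : i∈ω⟩ of members of ℋ satisfying condition (*), and L is not order-isomorphic to any member of ℋ. Then ⟨ℙ(L),≤*⟩ is σ-closed: for every sequence ⟨A_n : n∈ω⟩ in ℙ(L) with A_{n+1} ≤* A_n for all n∈ω, there exists A ∈ ℙ(L) with A ≤* A_n for all n∈ω. -/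
open Set

set_option linter.unusedSectionVars false
set_option linter.unusedVariables false
namespace Stmt17Aux

open Set

variable {α β : Type*} [LinearOrder α] [LinearOrder β]

/-- order iso from a set to its image under a strictly monotone map -/
noncomputable def imgIso (g : α → β) (hg : StrictMono g) (S : Set α) :
    ↥S ≃o ↥(g '' S) := by
  have h : StrictMono (fun x : ↥S => g ↑x) := fun a b hab => hg hab
  refine (h.orderIso _).trans (OrderIso.setCongr _ _ ?_)
  ext y
  simp [Set.mem_image]

/-- order iso from preimage to a subset of the range -/
noncomputable def preimgIso (g : α → β) (hg : StrictMono g) (C : Set β)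
    (hC : C ⊆ Set.range g) : ↥(g ⁻¹' C) ≃o ↥C := by
  refine StrictMono.orderIsoOfSurjective (fun x => ⟨g ↑x, x.2⟩) (fun a b h => ?_) (fun c => ?_)
  · exact hg h
  · obtain ⟨x, hx⟩ := hC c.2
    exact ⟨⟨x, by simp only [Set.mem_preimage, hx]; exact c.2⟩, Subtype.ext hx⟩

/-- The master gluing lemma: a family of strictly monotone maps on blocks of a
partitioned set glues to a strictly monotone map. -/
theorem glue {ι : Type*} [LinearOrder ι] (N : ι → Set α) (T : Set α)
    (hU : (⋃ i, N i) = T)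
    (horder : ∀ i j, i < j → ∀ x ∈ N i, ∀ y ∈ N j, x < y)
    (f : ∀ i, ↥(N i) → β) (hf : ∀ i, StrictMono (f i))
    (hcross : ∀ i j, i < j → ∀ x y, f i x < f j y) :
    ∃ F : ↥T → β, StrictMono F ∧ (∀ (i : ι) (x : ↥T) (h : (x : α) ∈ N i), F x = f i ⟨↑x, h⟩)
      ∧ Set.range F = ⋃ i, Set.range (f i) := by
  have hmem : ∀ x : ↥T, ∃ i, (x : α) ∈ N i := fun x => Set.mem_iUnion.mp (hU ▸ x.2)
  choose idx hidx using hmem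
  have heq : ∀ (i j : ι) (x : α), x ∈ N i → x ∈ N j → i = j := by
    intro i j x hxi hxj
    rcases lt_trichotomy i j with h | h | h
    · exact absurd (horder i j h x hxi x hxj) (lt_irrefl x)
    · exact h
    · exact absurd (horder j i h x hxj x hxi) (lt_irrefl x)
  have hkey : ∀ (i j : ι), i = j → ∀ (x : α) (hi : x ∈ N i) (hj : x ∈ N j),
      f i ⟨x, hi⟩ = f j ⟨x, hj⟩ := by rintro i j rfl x hi hj; rfl
  refine ⟨fun x => f (idx x) ⟨↑x, hidx x⟩, ?_, ?_, ?_⟩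
  · intro a b hab
    have hab' : (a : α) < (b : α) := hab
    rcases lt_trichotomy (idx a) (idx b) with h | h | h
    · exact hcross _ _ h _ _
    · show f (idx a) ⟨↑a, hidx a⟩ < f (idx b) ⟨↑b, hidx b⟩
      rw [hkey (idx a) (idx b) h ↑a (hidx a) (h ▸ hidx a)]
      exact hf (idx b) (show ((⟨↑a, h ▸ hidx a⟩ : ↥(N (idx b)))) < ⟨↑b, hidx b⟩ from hab')
    · exact absurd hab' (not_lt.mpr (horder _ _ h ↑b (hidx b) ↑a (hidx a)).le)
  · intro i x h
    exact hkey (idx x) i (heq _ _ _ (hidx x) h) ↑x (hidx x) h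
  · ext y
    constructor
    · rintro ⟨x, rfl⟩
      exact Set.mem_iUnion.mpr ⟨idx x, ⟨⟨↑x, hidx x⟩, rfl⟩⟩
    · intro hy
      obtain ⟨i, hy⟩ := Set.mem_iUnion.mp hy
      obtain ⟨u, rfl⟩ := hy
      have hxT : (u : α) ∈ T := hU ▸ Set.mem_iUnion.mpr ⟨i, u.2⟩
      refine ⟨⟨↑u, hxT⟩, ?_⟩
      exact (hkey _ i (heq _ _ _ (hidx ⟨↑u, hxT⟩) u.2) ↑u _ u.2).trans (by simp)

/-- Embed any countable suborder into a rational interval. -/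
theorem intoIoo {L : Type*} [LinearOrder L] [Countable L] (A : Set L) (a b : ℚ) (hab : a < b) :
    ∃ f : ↥A → ℚ, StrictMono f ∧ ∀ x, f x ∈ Set.Ioo a b := by
  haveI : Nontrivial ↥(Set.Ioo a b) :=
    ⟨⟨(2*a+b)/3, by simp only [Set.mem_Ioo]; constructor <;> linarith⟩,
     ⟨(a+2*b)/3, by simp only [Set.mem_Ioo]; constructor <;> linarith⟩,
     by intro h; rw [Subtype.mk_eq_mk] at h; linarith⟩
  haveI : DenselyOrdered ↥(Set.Ioo a b : Set ℚ) := by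
    constructor
    rintro ⟨x, hx⟩ ⟨y, hy⟩ h
    have h' : x < y := h
    refine ⟨⟨(x+y)/2, ?_, ?_⟩, ?_, ?_⟩
    · exact lt_trans hx.1 (by linarith)
    · exact lt_trans (by linarith) hy.2
    · show x < (x+y)/2; linarith
    · show (x+y)/2 < y; linarith
  obtain ⟨e⟩ := Order.embedding_from_countable_to_dense ↥A ↥(Set.Ioo a b : Set ℚ)
  exact ⟨fun x => ↑(e x), fun u v huv => Subtype.coe_lt_coe.mpr (e.strictMono huv),
    fun x => (e x).2⟩

/-- An ω-sum of sets of type in ℋ satisfying (*) has type in ℋ. -/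
theorem setInH_omegaSum {L : Type*} [LinearOrder L] [Countable L] (T : Set L) (N : ℕ → Set L)
    (hU : (⋃ i, N i) = T) (hne : ∀ i, (N i).Nonempty)
    (hmono : ∀ i j, i < j → ∀ x ∈ N i, ∀ y ∈ N j, x < y)
    (hH : ∀ i, SetInH (N i))
    (hstar : ∀ i, {j | Nonempty (↥(N i) ↪o ↥(N j))}.Infinite) :
    SetInH T := by
  have key := fun i : ℕ => intoIoo (N i) i (i+1) (by linarith)
  choose f hfm hfI using key
  have hcross : ∀ i j : ℕ, i < j → ∀ x y, f i x < f j y := by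
    intro i j hij x y
    have hx := (hfI i x).2
    have hy := (hfI j y).1
    have hij' : (i : ℚ) + 1 ≤ (j : ℚ) := by exact_mod_cast hij
    linarith
  obtain ⟨F, hFm, _hFeq, hFr⟩ := glue N T hU hmono f hfm hcross
  set K : ℕ → Set ℚ := fun i => Set.range (f i) with hK
  have hKiso : ∀ i, Nonempty (↥(N i) ≃o ↥(K i)) := fun i => ⟨(hfm i).orderIso (f i)⟩
  have hKH : ∀ i, InH (K i) := by
    intro i
    obtain ⟨M, hM, ⟨eiso⟩⟩ := hH i
    exact InH.iso hM ⟨eiso.symm.trans ((hKiso i).some)⟩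
  have hKne : ∀ i, (K i).Nonempty := fun i =>
    ⟨f i ⟨(hne i).choose, (hne i).choose_spec⟩, Set.mem_range_self _⟩
  have hKstar : ∀ i, {j | Nonempty (↥(K i) ↪o ↥(K j))}.Infinite := by
    intro i
    apply (hstar i).mono
    rintro j ⟨e⟩
    exact Set.mem_setOf.mpr
      ⟨(((hKiso i).some.symm.toOrderEmbedding.trans e).trans (hKiso j).some.toOrderEmbedding)⟩
  have hKlt : ∀ i j, i < j → ∀ x ∈ K i, ∀ y ∈ K j, x < y := by
    rintro i j hij x ⟨u, rfl⟩ y ⟨v, rfl⟩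
    exact hcross i j hij u v
  refine ⟨⋃ i, K i, InH.omegaSum K hKne hKH hKstar hKlt, ⟨?_⟩⟩
  exact (hFm.orderIso F).trans (OrderIso.setCongr _ _ hFr)

/-- An ω*-sum of sets of type in ℋ satisfying (*) has type in ℋ. -/
theorem setInH_omegaStarSum {L : Type*} [LinearOrder L] [Countable L] (T : Set L) (N : ℕ → Set L)
    (hU : (⋃ i, N i) = T) (hne : ∀ i, (N i).Nonempty)
    (hmono : ∀ i j, i < j → ∀ x ∈ N i, ∀ y ∈ N j, y < x)
    (hH : ∀ i, SetInH (N i))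
    (hstar : ∀ i, {j | Nonempty (↥(N i) ↪o ↥(N j))}.Infinite) :
    SetInH T := by
  have key := fun i : ℕ => intoIoo (N i) (-(i:ℚ)-1) (-(i:ℚ)) (by linarith)
  choose f hfm hfI using key
  have hcross' : ∀ i j : ℕ, j < i → ∀ x y, f i x < f j y := by
    intro i j hij x y
    have hx := (hfI i x).2
    have hy := (hfI j y).1
    have hc : (j : ℚ) + 1 ≤ (i : ℚ) := by exact_mod_cast hij
    linarith
  have horder : ∀ i j : ℕᵒᵈ, i < j →
      ∀ x ∈ N (OrderDual.ofDual i), ∀ y ∈ N (OrderDual.ofDual j), x < y := by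
    intro i j hij x hx y hy
    exact hmono (OrderDual.ofDual j) (OrderDual.ofDual i) hij y hy x hx
  have hU' : (⋃ i : ℕᵒᵈ, N (OrderDual.ofDual i)) = T := by
    rw [← hU]; ext x
    simp only [Set.mem_iUnion]
    exact ⟨fun ⟨i, h⟩ => ⟨OrderDual.ofDual i, h⟩, fun ⟨i, h⟩ => ⟨OrderDual.toDual i, h⟩⟩
  obtain ⟨F, hFm, _hFeq, hFr⟩ := glue (ι := ℕᵒᵈ) (fun i => N (OrderDual.ofDual i)) T hU' horder
    (fun i => f (OrderDual.ofDual i)) (fun i => hfm _)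
    (fun i j hij x y => hcross' (OrderDual.ofDual i) (OrderDual.ofDual j) hij x y)
  set K : ℕ → Set ℚ := fun i => Set.range (f i) with hK
  have hKiso : ∀ i, Nonempty (↥(N i) ≃o ↥(K i)) := fun i => ⟨(hfm i).orderIso (f i)⟩
  have hKH : ∀ i, InH (K i) := by
    intro i
    obtain ⟨M, hM, ⟨eiso⟩⟩ := hH i
    exact InH.iso hM ⟨eiso.symm.trans ((hKiso i).some)⟩
  have hKne : ∀ i, (K i).Nonempty := fun i =>
    ⟨f i ⟨(hne i).choose, (hne i).choose_spec⟩, Set.mem_range_self _⟩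
  have hKstar : ∀ i, {j | Nonempty (↥(K i) ↪o ↥(K j))}.Infinite := by
    intro i
    apply (hstar i).mono
    rintro j ⟨e⟩
    exact Set.mem_setOf.mpr
      ⟨(((hKiso i).some.symm.toOrderEmbedding.trans e).trans (hKiso j).some.toOrderEmbedding)⟩
  have hKlt : ∀ i j, i < j → ∀ x ∈ K i, ∀ y ∈ K j, y < x := by
    rintro i j hij x ⟨u, rfl⟩ y ⟨v, rfl⟩
    exact hcross' j i hij v u
  refine ⟨⋃ i, K i, InH.omegaStarSum K hKne hKH hKstar hKlt, ⟨?_⟩⟩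
  refine (hFm.orderIso F).trans (OrderIso.setCongr _ _ ?_)
  rw [hFr]
  ext x
  simp only [Set.mem_iUnion]
  exact ⟨fun ⟨i, h⟩ => ⟨OrderDual.ofDual i, h⟩, fun ⟨i, h⟩ => ⟨OrderDual.toDual i, h⟩⟩


/-- Bundled context for the main theorem. -/
structure Ctx (L : Type*) [LinearOrder L] [Countable L] where
  P0 : Set L
  P1 : Set L
  Li0 : ℕ → Set L
  Li1 : ℕ → Set L
  hcover : P0 ∪ P1 = Set.univ
  hdisj : Disjoint P0 P1
  hlt : ∀ x ∈ P0, ∀ y ∈ P1, x < y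
  h0 : IsOmegaStarSumH P0 Li0
  h1 : IsOmegaSumH P1 Li1
  hnH : ¬ TypeInH L

namespace Ctx

variable {L : Type*} [LinearOrder L] [Countable L] (c : Ctx L)

theorem mem_cases (x : L) : x ∈ c.P0 ∨ x ∈ c.P1 := by
  have : x ∈ c.P0 ∪ c.P1 := c.hcover ▸ Set.mem_univ x
  exact this

theorem not_both {x : L} (h0 : x ∈ c.P0) (h1 : x ∈ c.P1) : False :=
  Set.disjoint_left.mp c.hdisj h0 h1

theorem li0_subset (k : ℕ) : c.Li0 k ⊆ c.P0 := by
  rw [← c.h0.union]; exact Set.subset_iUnion c.Li0 k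

theorem li1_subset (k : ℕ) : c.Li1 k ⊆ c.P1 := by
  rw [← c.h1.union]; exact Set.subset_iUnion c.Li1 k

theorem mem0_block {x : L} (h : x ∈ c.P0) : ∃ k, x ∈ c.Li0 k :=
  Set.mem_iUnion.mp (c.h0.union ▸ h)

theorem mem1_block {x : L} (h : x ∈ c.P1) : ∃ k, x ∈ c.Li1 k :=
  Set.mem_iUnion.mp (c.h1.union ▸ h)

theorem block0_unique {x : L} {i j : ℕ} (hi : x ∈ c.Li0 i) (hj : x ∈ c.Li0 j) : i = j := by
  by_contra h
  exact Set.disjoint_left.mp (c.h0.disj i j h) hi hj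

theorem block1_unique {x : L} {i j : ℕ} (hi : x ∈ c.Li1 i) (hj : x ∈ c.Li1 j) : i = j := by
  by_contra h
  exact Set.disjoint_left.mp (c.h1.disj i j h) hi hj

/-- P0 is downward closed. -/
theorem p0_dc {x y : L} (hx : x ∈ c.P0) (hyx : y < x) : y ∈ c.P0 := by
  rcases c.mem_cases y with h | h
  · exact h
  · exact absurd (c.hlt x hx y h) (not_lt.mpr hyx.le)

/-- P1 is upward closed. -/
theorem p1_uc {x y : L} (hx : x ∈ c.P1) (hxy : x < y) : y ∈ c.P1 := by
  rcases c.mem_cases y with h | h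
  · exact absurd (c.hlt y h x hx) (not_lt.mpr hxy.le)
  · exact h

/-- anything below an element of a `Li0` block lies in a block with index ≥. -/
theorem below_block0 {x t : L} {k : ℕ} (ht : t ∈ c.Li0 k) (hx : x < t) :
    ∃ m, k ≤ m ∧ x ∈ c.Li0 m := by
  have hx0 : x ∈ c.P0 := c.p0_dc (c.li0_subset k ht) hx
  obtain ⟨m, hm⟩ := c.mem0_block hx0
  refine ⟨m, ?_, hm⟩
  by_contra h
  exact absurd (c.h0.mono m k (by omega) x hm t ht) (not_lt.mpr hx.le)

theorem above_block1 {x s : L} {k : ℕ} (hs : s ∈ c.Li1 k) (hx : s < x) :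
    ∃ m, k ≤ m ∧ x ∈ c.Li1 m := by
  have hx1 : x ∈ c.P1 := c.p1_uc (c.li1_subset k hs) hx
  obtain ⟨m, hm⟩ := c.mem1_block hx1
  refine ⟨m, ?_, hm⟩
  by_contra h
  exact absurd (c.h1.mono m k (by omega) x hm s hs) (not_lt.mpr hx.le)

theorem p0_nonempty : c.P0.Nonempty := ⟨(c.h0.nonemp 0).choose, c.li0_subset 0 (c.h0.nonemp 0).choose_spec⟩

theorem p1_nonempty : c.P1.Nonempty := ⟨(c.h1.nonemp 0).choose, c.li1_subset 0 (c.h1.nonemp 0).choose_spec⟩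

instance : Nonempty ↥c.P0 := ⟨⟨c.p0_nonempty.choose, c.p0_nonempty.choose_spec⟩⟩
instance : Nonempty ↥c.P1 := ⟨⟨c.p1_nonempty.choose, c.p1_nonempty.choose_spec⟩⟩

/-- function form of an embedding between suborders -/
theorem embToFun {A B : Set L} (h : Nonempty (↥A ↪o ↥B)) :
    ∃ f : ↥A → L, StrictMono f ∧ ∀ x, f x ∈ B := by
  obtain ⟨e⟩ := h
  exact ⟨fun x => ↑(e x), fun a b hab => Subtype.coe_lt_coe.mpr (e.strictMono hab),
    fun x => (e x).2⟩

theorem funToEmb {A B : Set L} (f : ↥A → L) (hf : StrictMono f) (hfB : ∀ x, f x ∈ B) :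
    Nonempty (↥A ↪o ↥B) :=
  ⟨OrderEmbedding.ofStrictMono (fun x => (⟨f x, hfB x⟩ : ↥B)) (fun a b hab => hf hab)⟩

/-- star-selection: embedding of block k into a block of arbitrarily large index. -/
theorem star0_fun (k n : ℕ) : ∃ j, n < j ∧ ∃ f : ↥(c.Li0 k) → L, StrictMono f ∧
    ∀ x, f x ∈ c.Li0 j := by
  obtain ⟨j, hj, hjn⟩ := (c.h0.star k).exists_gt n
  exact ⟨j, hjn, embToFun hj⟩

theorem star1_fun (k n : ℕ) : ∃ j, n < j ∧ ∃ f : ↥(c.Li1 k) → L, StrictMono f ∧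
    ∀ x, f x ∈ c.Li1 j := by
  obtain ⟨j, hj, hjn⟩ := (c.h1.star k).exists_gt n
  exact ⟨j, hjn, embToFun hj⟩

/-- self-embedding of P0 into deep tails -/
theorem tail0 (n : ℕ) : ∃ F : ↥c.P0 → L, StrictMono F ∧
    ∀ x, ∃ j, n < j ∧ F x ∈ c.Li0 j := by
  -- recursively chosen strictly increasing targets
  have step : ∀ k m, ∃ j, m < j ∧ ∃ f : ↥(c.Li0 k) → L, StrictMono f ∧
      ∀ x, f x ∈ c.Li0 j := fun k m => c.star0_fun k m
  let J : ℕ → ℕ := fun k => Nat.rec ((step 0 n).choose)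
    (fun k ih => (step (k+1) ih).choose) k
  have hJ0 : n < J 0 := (step 0 n).choose_spec.1
  have hJsucc : ∀ k, J k < J (k+1) := fun k => (step (k+1) (J k)).choose_spec.1
  have hJmono : StrictMono J := strictMono_nat_of_lt_succ hJsucc
  have hJn : ∀ k, n < J k := by
    intro k
    induction k with
    | zero => exact hJ0
    | succ k ih => exact lt_trans ih (hJsucc k)
  have hf : ∀ k, ∃ f : ↥(c.Li0 k) → L, StrictMono f ∧ ∀ x, f x ∈ c.Li0 (J k) := by
    intro k
    cases k with
    | zero => exact (step 0 n).choose_spec.2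
    | succ k => exact (step (k+1) (J k)).choose_spec.2
  choose f hfm hfv using hf
  -- glue over ℕᵒᵈ
  have hU' : (⋃ i : ℕᵒᵈ, c.Li0 (OrderDual.ofDual i)) = c.P0 := by
    rw [← c.h0.union]; ext x
    simp only [Set.mem_iUnion]
    exact ⟨fun ⟨i, h⟩ => ⟨OrderDual.ofDual i, h⟩, fun ⟨i, h⟩ => ⟨OrderDual.toDual i, h⟩⟩
  have horder : ∀ i j : ℕᵒᵈ, i < j →
      ∀ x ∈ c.Li0 (OrderDual.ofDual i), ∀ y ∈ c.Li0 (OrderDual.ofDual j), x < y := by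
    intro i j hij x hx y hy
    exact c.h0.mono (OrderDual.ofDual j) (OrderDual.ofDual i) hij y hy x hx
  have hcross : ∀ i j : ℕᵒᵈ, i < j → ∀ x y,
      f (OrderDual.ofDual i) x < f (OrderDual.ofDual j) y := by
    intro i j hij x y
    have hij' : (OrderDual.ofDual j : ℕ) < OrderDual.ofDual i := hij
    exact c.h0.mono (J (OrderDual.ofDual j)) (J (OrderDual.ofDual i)) (hJmono hij')
      _ (hfv _ y) _ (hfv _ x)
  obtain ⟨F, hFm, hFeq, _⟩ := glue (ι := ℕᵒᵈ) (fun i => c.Li0 (OrderDual.ofDual i)) c.P0 hU'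
    horder (fun i => f (OrderDual.ofDual i)) (fun i => hfm _) hcross
  refine ⟨F, hFm, ?_⟩
  intro x
  obtain ⟨k, hk⟩ := c.mem0_block x.2
  refine ⟨J k, hJn k, ?_⟩
  rw [hFeq (OrderDual.toDual k) x hk]
  exact hfv k _

/-- self-embedding of P1 into deep tails -/
theorem tail1 (n : ℕ) : ∃ F : ↥c.P1 → L, StrictMono F ∧
    ∀ x, ∃ j, n < j ∧ F x ∈ c.Li1 j := by
  have step : ∀ k m, ∃ j, m < j ∧ ∃ f : ↥(c.Li1 k) → L, StrictMono f ∧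
      ∀ x, f x ∈ c.Li1 j := fun k m => c.star1_fun k m
  let J : ℕ → ℕ := fun k => Nat.rec ((step 0 n).choose)
    (fun k ih => (step (k+1) ih).choose) k
  have hJ0 : n < J 0 := (step 0 n).choose_spec.1
  have hJsucc : ∀ k, J k < J (k+1) := fun k => (step (k+1) (J k)).choose_spec.1
  have hJmono : StrictMono J := strictMono_nat_of_lt_succ hJsucc
  have hJn : ∀ k, n < J k := by
    intro k
    induction k with
    | zero => exact hJ0
    | succ k ih => exact lt_trans ih (hJsucc k)
  have hf : ∀ k, ∃ f : ↥(c.Li1 k) → L, StrictMono f ∧ ∀ x, f x ∈ c.Li1 (J k) := by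
    intro k
    cases k with
    | zero => exact (step 0 n).choose_spec.2
    | succ k => exact (step (k+1) (J k)).choose_spec.2
  choose f hfm hfv using hf
  have hcross : ∀ i j : ℕ, i < j → ∀ x y, f i x < f j y := by
    intro i j hij x y
    exact c.h1.mono (J i) (J j) (hJmono hij) _ (hfv _ x) _ (hfv _ y)
  obtain ⟨F, hFm, hFeq, _⟩ := glue c.Li1 c.P1 c.h1.union c.h1.mono f hfm hcross
  refine ⟨F, hFm, ?_⟩
  intro x
  obtain ⟨k, hk⟩ := c.mem1_block x.2
  refine ⟨J k, hJn k, ?_⟩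
  rw [hFeq k x hk]
  exact hfv k _

end Ctx
namespace Ctx

variable {L : Type*} [LinearOrder L] [Countable L] (c : Ctx L)

/-- P0 embeds into any of its nonempty initial segments. -/
theorem selfEmbInitial0 (P : Set L) (hPsub : P ⊆ c.P0)
    (hPdc : ∀ x ∈ P, ∀ y, y < x → y ∈ c.P0 → y ∈ P) (hPne : P.Nonempty) :
    ∃ F : ↥c.P0 → L, StrictMono F ∧ ∀ x, F x ∈ P := by
  obtain ⟨p, hp⟩ := hPne
  obtain ⟨i₁, hi₁⟩ := c.mem0_block (hPsub hp)
  obtain ⟨F, hFm, hFv⟩ := c.tail0 i₁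
  refine ⟨F, hFm, fun x => ?_⟩
  obtain ⟨j, hj, hFj⟩ := hFv x
  have hlt : F x < p := c.h0.mono i₁ j hj p hi₁ (F x) hFj
  exact hPdc p hp (F x) hlt (c.li0_subset j hFj)

/-- P1 embeds into any of its nonempty final segments. -/
theorem selfEmbFinal1 (P : Set L) (hPsub : P ⊆ c.P1)
    (hPuc : ∀ x ∈ P, ∀ y, x < y → y ∈ c.P1 → y ∈ P) (hPne : P.Nonempty) :
    ∃ F : ↥c.P1 → L, StrictMono F ∧ ∀ x, F x ∈ P := by
  obtain ⟨p, hp⟩ := hPne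
  obtain ⟨i₁, hi₁⟩ := c.mem1_block (hPsub hp)
  obtain ⟨F, hFm, hFv⟩ := c.tail1 i₁
  refine ⟨F, hFm, fun x => ?_⟩
  obtain ⟨j, hj, hFj⟩ := hFv x
  have hlt : p < F x := c.h1.mono i₁ j hj p hi₁ (F x) hFj
  exact hPuc p hp (F x) hlt (c.li1_subset j hFj)

/-- If P0 embeds into the suborder P1 then it embeds into a single block of P1. -/
theorem intoBlock1 (F : ↥c.P0 → L) (hF : StrictMono F) (hFv : ∀ x, F x ∈ c.P1) :
    ∃ j, ∃ G : ↥c.P0 → L, StrictMono G ∧ ∀ x, G x ∈ c.Li1 j := by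
  have hIne : {i | ∃ x, F x ∈ c.Li1 i}.Nonempty := by
    obtain ⟨x⟩ := (inferInstance : Nonempty ↥c.P0)
    obtain ⟨i, hi⟩ := c.mem1_block (hFv x)
    exact ⟨i, x, hi⟩
  set i₂ := sInf {i | ∃ x, F x ∈ c.Li1 i} with hi₂def
  obtain ⟨x₂, hx₂⟩ := Nat.sInf_mem hIne
  set P : Set L := {y | ∃ h : y ∈ c.P0, F ⟨y, h⟩ ∈ c.Li1 i₂} with hPdef
  have hPsub : P ⊆ c.P0 := fun y hy => hy.choose
  have hPne : P.Nonempty := ⟨↑x₂, x₂.2, by rwa [Subtype.eta]⟩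
  have hPdc : ∀ x ∈ P, ∀ y, y < x → y ∈ c.P0 → y ∈ P := by
    rintro x ⟨hx0, hxi⟩ y hyx hy0
    refine ⟨hy0, ?_⟩
    have hlt : F ⟨y, hy0⟩ < F ⟨x, hx0⟩ := hF (show (⟨y, hy0⟩ : ↥c.P0) < ⟨x, hx0⟩ from hyx)
    obtain ⟨m, hm⟩ := c.mem1_block (hFv ⟨y, hy0⟩)
    have hm2 : m ≤ i₂ := by
      by_contra h
      exact absurd (c.h1.mono i₂ m (by omega) _ hxi _ hm) (not_lt.mpr hlt.le)
    have hm3 : i₂ ≤ m := Nat.sInf_le ⟨⟨y, hy0⟩, hm⟩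
    have : m = i₂ := le_antisymm hm2 hm3
    rwa [this] at hm
  obtain ⟨F₁, hF₁m, hF₁v⟩ := c.selfEmbInitial0 P hPsub hPdc hPne
  refine ⟨i₂, fun x => F ⟨F₁ x, hPsub (hF₁v x)⟩, ?_, ?_⟩
  · intro a b hab
    exact hF (show (⟨F₁ a, _⟩ : ↥c.P0) < ⟨F₁ b, _⟩ from hF₁m hab)
  · intro x
    obtain ⟨h0, h1⟩ := hF₁v x
    exact h1

/-- If P1 embeds into the suborder P0 then it embeds into a single block of P0. -/
theorem intoBlock0' (F : ↥c.P1 → L) (hF : StrictMono F) (hFv : ∀ x, F x ∈ c.P0) :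
    ∃ j, ∃ G : ↥c.P1 → L, StrictMono G ∧ ∀ x, G x ∈ c.Li0 j := by
  have hIne : {i | ∃ x, F x ∈ c.Li0 i}.Nonempty := by
    obtain ⟨x⟩ := (inferInstance : Nonempty ↥c.P1)
    obtain ⟨i, hi⟩ := c.mem0_block (hFv x)
    exact ⟨i, x, hi⟩
  set i₂ := sInf {i | ∃ x, F x ∈ c.Li0 i} with hi₂def
  obtain ⟨x₂, hx₂⟩ := Nat.sInf_mem hIne
  set P : Set L := {y | ∃ h : y ∈ c.P1, F ⟨y, h⟩ ∈ c.Li0 i₂} with hPdef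
  have hPsub : P ⊆ c.P1 := fun y hy => hy.choose
  have hPne : P.Nonempty := ⟨↑x₂, x₂.2, by rwa [Subtype.eta]⟩
  have hPuc : ∀ x ∈ P, ∀ y, x < y → y ∈ c.P1 → y ∈ P := by
    rintro x ⟨hx1, hxi⟩ y hxy hy1
    refine ⟨hy1, ?_⟩
    have hlt : F ⟨x, hx1⟩ < F ⟨y, hy1⟩ := hF (show (⟨x, hx1⟩ : ↥c.P1) < ⟨y, hy1⟩ from hxy)
    obtain ⟨m, hm⟩ := c.mem0_block (hFv ⟨y, hy1⟩)
    have hm2 : m ≤ i₂ := by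
      by_contra h
      exact absurd (c.h0.mono i₂ m (by omega) _ hxi _ hm) (not_lt.mpr hlt.le)
    have hm3 : i₂ ≤ m := Nat.sInf_le ⟨⟨y, hy1⟩, hm⟩
    have : m = i₂ := le_antisymm hm2 hm3
    rwa [this] at hm
  obtain ⟨F₁, hF₁m, hF₁v⟩ := c.selfEmbFinal1 P hPsub hPuc hPne
  refine ⟨i₂, fun x => F ⟨F₁ x, hPsub (hF₁v x)⟩, ?_, ?_⟩
  · intro a b hab
    exact hF (show (⟨F₁ a, _⟩ : ↥c.P1) < ⟨F₁ b, _⟩ from hF₁m hab)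
  · intro x
    obtain ⟨h0, h1⟩ := hF₁v x
    exact h1

/-- If P0 embeds into finitely many of its own blocks then into a single block. -/
theorem intoBlock0 (n : ℕ) (F : ↥c.P0 → L) (hF : StrictMono F)
    (hFv : ∀ x, ∃ i, i ≤ n ∧ F x ∈ c.Li0 i) :
    ∃ s, ∃ G : ↥c.P0 → L, StrictMono G ∧ ∀ x, G x ∈ c.Li0 s := by
  induction n generalizing F with
  | zero =>
    refine ⟨0, F, hF, fun x => ?_⟩
    obtain ⟨i, hi, h⟩ := hFv x
    rwa [Nat.le_zero.mp hi] at h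
  | succ n ih =>
    set P : Set L := {y | ∃ h : y ∈ c.P0, F ⟨y, h⟩ ∈ c.Li0 (n+1)} with hPdef
    by_cases hPne : P.Nonempty
    · have hPsub : P ⊆ c.P0 := fun y hy => hy.choose
      have hPdc : ∀ x ∈ P, ∀ y, y < x → y ∈ c.P0 → y ∈ P := by
        rintro x ⟨hx0, hxi⟩ y hyx hy0
        refine ⟨hy0, ?_⟩
        have hlt : F ⟨y, hy0⟩ < F ⟨x, hx0⟩ := hF (show (⟨y, hy0⟩ : ↥c.P0) < ⟨x, hx0⟩ from hyx)
        obtain ⟨m, hmn, hm⟩ := hFv ⟨y, hy0⟩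
        have : m = n + 1 := by
          by_contra h
          have hmlt : m < n + 1 := by omega
          exact absurd (c.h0.mono m (n+1) hmlt _ hm _ hxi) (not_lt.mpr hlt.le)
        rwa [this] at hm
      obtain ⟨F₁, hF₁m, hF₁v⟩ := c.selfEmbInitial0 P hPsub hPdc hPne
      refine ⟨n+1, fun x => F ⟨F₁ x, hPsub (hF₁v x)⟩, ?_, ?_⟩
      · intro a b hab
        exact hF (show (⟨F₁ a, _⟩ : ↥c.P0) < ⟨F₁ b, _⟩ from hF₁m hab)
      · intro x
        exact (hF₁v x).choose_spec
    · apply ih F hF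
      intro x
      obtain ⟨i, hi, h⟩ := hFv x
      refine ⟨i, ?_, h⟩
      rcases Nat.lt_succ_iff_lt_or_eq.mp (Nat.lt_succ_of_le hi) with h' | h'
      · omega
      · exfalso
        apply hPne
        refine ⟨↑x, x.2, ?_⟩
        rw [Subtype.eta]
        rwa [h'] at h

/-- If P1 embeds into finitely many of its own blocks then into a single block. -/
theorem intoBlock1' (n : ℕ) (F : ↥c.P1 → L) (hF : StrictMono F)
    (hFv : ∀ x, ∃ i, i ≤ n ∧ F x ∈ c.Li1 i) :
    ∃ s, ∃ G : ↥c.P1 → L, StrictMono G ∧ ∀ x, G x ∈ c.Li1 s := by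
  induction n generalizing F with
  | zero =>
    refine ⟨0, F, hF, fun x => ?_⟩
    obtain ⟨i, hi, h⟩ := hFv x
    rwa [Nat.le_zero.mp hi] at h
  | succ n ih =>
    set P : Set L := {y | ∃ h : y ∈ c.P1, F ⟨y, h⟩ ∈ c.Li1 (n+1)} with hPdef
    by_cases hPne : P.Nonempty
    · have hPsub : P ⊆ c.P1 := fun y hy => hy.choose
      have hPuc : ∀ x ∈ P, ∀ y, x < y → y ∈ c.P1 → y ∈ P := by
        rintro x ⟨hx1, hxi⟩ y hxy hy1
        refine ⟨hy1, ?_⟩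
        have hlt : F ⟨x, hx1⟩ < F ⟨y, hy1⟩ := hF (show (⟨x, hx1⟩ : ↥c.P1) < ⟨y, hy1⟩ from hxy)
        obtain ⟨m, hmn, hm⟩ := hFv ⟨y, hy1⟩
        have : m = n + 1 := by
          by_contra h
          have hmlt : m < n + 1 := by omega
          exact absurd (c.h1.mono m (n+1) hmlt _ hm _ hxi) (not_lt.mpr hlt.le)
        rwa [this] at hm
      obtain ⟨F₁, hF₁m, hF₁v⟩ := c.selfEmbFinal1 P hPsub hPuc hPne
      refine ⟨n+1, fun x => F ⟨F₁ x, hPsub (hF₁v x)⟩, ?_, ?_⟩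
      · intro a b hab
        exact hF (show (⟨F₁ a, _⟩ : ↥c.P1) < ⟨F₁ b, _⟩ from hF₁m hab)
      · intro x
        exact (hF₁v x).choose_spec
    · apply ih F hF
      intro x
      obtain ⟨i, hi, h⟩ := hFv x
      refine ⟨i, ?_, h⟩
      rcases Nat.lt_succ_iff_lt_or_eq.mp (Nat.lt_succ_of_le hi) with h' | h'
      · omega
      · exfalso
        apply hPne
        refine ⟨↑x, x.2, ?_⟩
        rw [Subtype.eta]
        rwa [h'] at h

end Ctx
namespace Ctx

variable {L : Type*} [LinearOrder L] [Countable L] (c : Ctx L)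

theorem setInH_P0 : SetInH c.P0 :=
  setInH_omegaStarSum c.P0 c.Li0 c.h0.union c.h0.nonemp c.h0.mono c.h0.inH c.h0.star

theorem setInH_P1 : SetInH c.P1 :=
  setInH_omegaSum c.P1 c.Li1 c.h1.union c.h1.nonemp c.h1.mono c.h1.inH c.h1.star

/-- If P0 embeds into a block of P1, then L is in ℋ: contradiction. -/
theorem factA (j : ℕ) (F : ↥c.P0 → L) (hF : StrictMono F) (hFv : ∀ x, F x ∈ c.Li1 j) :
    False := by
  apply c.hnH
  set N : ℕ → Set L := fun i => match i with
    | 0 => c.P0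
    | (k+1) => c.Li1 k with hN
  have hU : (⋃ i, N i) = Set.univ := by
    ext x
    simp only [Set.mem_iUnion, Set.mem_univ, iff_true]
    rcases c.mem_cases x with h | h
    · exact ⟨0, h⟩
    · obtain ⟨k, hk⟩ := c.mem1_block h
      exact ⟨k+1, hk⟩
  have hne : ∀ i, (N i).Nonempty := by
    intro i
    match i with
    | 0 => exact c.p0_nonempty
    | (k+1) => exact c.h1.nonemp k
  have hmono : ∀ i j, i < j → ∀ x ∈ N i, ∀ y ∈ N j, x < y := by
    intro i j hij x hx y hy
    match i, j with
    | 0, 0 => omega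
    | 0, (l+1) => exact c.hlt x hx y (c.li1_subset l hy)
    | (k+1), 0 => omega
    | (k+1), (l+1) => exact c.h1.mono k l (by omega) x hx y hy
  have hH : ∀ i, SetInH (N i) := by
    intro i
    match i with
    | 0 => exact c.setInH_P0
    | (k+1) => exact c.h1.inH k
  have hstar : ∀ i, {m | Nonempty (↥(N i) ↪o ↥(N m))}.Infinite := by
    intro i
    match i with
    | 0 =>
      have h1 : (Nat.succ '' {m | Nonempty (↥(c.Li1 j) ↪o ↥(c.Li1 m))}).Infinite :=
        Set.Infinite.image (Set.injOn_of_injective Nat.succ_injective) (c.h1.star j)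
      apply h1.mono
      rintro m ⟨m', ⟨e⟩, rfl⟩
      have e₀ : Nonempty (↥c.P0 ↪o ↥(c.Li1 j)) := funToEmb F hF hFv
      exact ⟨(e₀.some.trans e : ↥c.P0 ↪o ↥(c.Li1 m'))⟩
    | (k+1) =>
      have h1 : (Nat.succ '' {m | Nonempty (↥(c.Li1 k) ↪o ↥(c.Li1 m))}).Infinite :=
        Set.Infinite.image (Set.injOn_of_injective Nat.succ_injective) (c.h1.star k)
      apply h1.mono
      rintro m ⟨m', ⟨e⟩, rfl⟩
      exact ⟨e⟩
  have := setInH_omegaSum Set.univ N hU hne hmono hH hstar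
  obtain ⟨M, hM, ⟨iso⟩⟩ := this
  exact ⟨M, hM, ⟨(OrderIso.Set.univ).symm.trans iso⟩⟩

/-- If P1 embeds into a block of P0, then L is in ℋ: contradiction. -/
theorem factB (j : ℕ) (F : ↥c.P1 → L) (hF : StrictMono F) (hFv : ∀ x, F x ∈ c.Li0 j) :
    False := by
  apply c.hnH
  set N : ℕ → Set L := fun i => match i with
    | 0 => c.P1
    | (k+1) => c.Li0 k with hN
  have hU : (⋃ i, N i) = Set.univ := by
    ext x
    simp only [Set.mem_iUnion, Set.mem_univ, iff_true]
    rcases c.mem_cases x with h | h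
    · obtain ⟨k, hk⟩ := c.mem0_block h
      exact ⟨k+1, hk⟩
    · exact ⟨0, h⟩
  have hne : ∀ i, (N i).Nonempty := by
    intro i
    match i with
    | 0 => exact c.p1_nonempty
    | (k+1) => exact c.h0.nonemp k
  have hmono : ∀ i j, i < j → ∀ x ∈ N i, ∀ y ∈ N j, y < x := by
    intro i j hij x hx y hy
    match i, j with
    | 0, 0 => omega
    | 0, (l+1) => exact c.hlt y (c.li0_subset l hy) x hx
    | (k+1), 0 => omega
    | (k+1), (l+1) => exact c.h0.mono k l (by omega) x hx y hy
  have hH : ∀ i, SetInH (N i) := by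
    intro i
    match i with
    | 0 => exact c.setInH_P1
    | (k+1) => exact c.h0.inH k
  have hstar : ∀ i, {m | Nonempty (↥(N i) ↪o ↥(N m))}.Infinite := by
    intro i
    match i with
    | 0 =>
      have h1 : (Nat.succ '' {m | Nonempty (↥(c.Li0 j) ↪o ↥(c.Li0 m))}).Infinite :=
        Set.Infinite.image (Set.injOn_of_injective Nat.succ_injective) (c.h0.star j)
      apply h1.mono
      rintro m ⟨m', ⟨e⟩, rfl⟩
      have e₀ : Nonempty (↥c.P1 ↪o ↥(c.Li0 j)) := funToEmb F hF hFv
      exact ⟨(e₀.some.trans e : ↥c.P1 ↪o ↥(c.Li0 m'))⟩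
    | (k+1) =>
      have h1 : (Nat.succ '' {m | Nonempty (↥(c.Li0 k) ↪o ↥(c.Li0 m))}).Infinite :=
        Set.Infinite.image (Set.injOn_of_injective Nat.succ_injective) (c.h0.star k)
      apply h1.mono
      rintro m ⟨m', ⟨e⟩, rfl⟩
      exact ⟨e⟩
  have := setInH_omegaStarSum Set.univ N hU hne hmono hH hstar
  obtain ⟨M, hM, ⟨iso⟩⟩ := this
  exact ⟨M, hM, ⟨(OrderIso.Set.univ).symm.trans iso⟩⟩

end Ctx
section DenseTree

variable {α : Type*} [LinearOrder α]

/-- tree of nested sets -/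
noncomputable def treeNode (pick : Set α → Set α × Set α × α) (Y₀ : Set α) : List Bool → Set α
  | [] => Y₀
  | (c :: w) => if c then (pick (treeNode pick Y₀ w)).2.1 else (pick (treeNode pick Y₀ w)).1

/-- prefix trichotomy for lists -/
theorem listPrefixTri (r r' : List Bool) :
    (∃ s, r' = r ++ s) ∨ (∃ s, r = r' ++ s) ∨
    (∃ p c c' s s', c ≠ c' ∧ r = p ++ c :: s ∧ r' = p ++ c' :: s') := by
  induction r generalizing r' with
  | nil => exact Or.inl ⟨r', rfl⟩
  | cons a ta ih =>
    cases r' with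
    | nil => exact Or.inr (Or.inl ⟨a :: ta, rfl⟩)
    | cons a' ta' =>
      by_cases haa : a = a'
      · subst haa
        rcases ih ta' with ⟨s, hs⟩ | ⟨s, hs⟩ | ⟨p, cb, cb', s, s', hne, h1, h2⟩
        · exact Or.inl ⟨s, by rw [hs]; rfl⟩
        · exact Or.inr (Or.inl ⟨s, by rw [hs]; rfl⟩)
        · exact Or.inr (Or.inr ⟨a :: p, cb, cb', s, s', hne, by rw [h1]; rfl, by rw [h2]; rfl⟩)
      · exact Or.inr (Or.inr ⟨[], a, a', ta, ta', haa, rfl, rfl⟩)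

/-- From a splitting system of "copies" one obtains a dense suborder. -/
theorem denseTree (C : Set (Set α))
    (hC : ∀ Y ∈ C, ∃ U ∈ C, ∃ V ∈ C, ∃ p ∈ Y,
      U ⊆ Y ∧ V ⊆ Y ∧ (∀ u ∈ U, u < p) ∧ (∀ v ∈ V, p < v))
    (Y₀ : Set α) (hY₀ : Y₀ ∈ C) :
    ∃ S : Set α, S ⊆ Y₀ ∧ S.Nontrivial ∧ DenselyOrdered ↥S := by
  classical
  obtain ⟨U0, hU0, V0, hV0, q0, hq0, _⟩ := hC Y₀ hY₀
  haveI : Inhabited α := ⟨q0⟩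
  have pickEx : ∀ Y : Set α, ∃ t : Set α × Set α × α, Y ∈ C →
      (t.1 ∈ C ∧ t.2.1 ∈ C ∧ t.2.2 ∈ Y ∧ t.1 ⊆ Y ∧ t.2.1 ⊆ Y ∧
        (∀ u ∈ t.1, u < t.2.2) ∧ (∀ v ∈ t.2.1, t.2.2 < v)) := by
    intro Y
    by_cases h : Y ∈ C
    · obtain ⟨U, hU, V, hV, p, hp, h1, h2, h3, h4⟩ := hC Y h
      exact ⟨⟨U, V, p⟩, fun _ => ⟨hU, hV, hp, h1, h2, h3, h4⟩⟩
    · exact ⟨⟨∅, ∅, default⟩, fun hY => absurd hY h⟩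
  choose pick pickSpec using pickEx
  set node : List Bool → Set α := treeNode pick Y₀ with hnode
  have node_nil : node [] = Y₀ := rfl
  have node_cons : ∀ (ch : Bool) w, node (ch :: w) =
      if ch then (pick (node w)).2.1 else (pick (node w)).1 := fun ch w => rfl
  set pt : List Bool → α := fun w => (pick (node w)).2.2 with hpt
  have nodeC : ∀ w, node w ∈ C := by
    intro w
    induction w with
    | nil => exact hY₀
    | cons ch w ih =>
      rw [node_cons]
      cases ch
      · simpa using (pickSpec (node w) ih).1
      · simpa using (pickSpec (node w) ih).2.1
  have nodeSub : ∀ (ch : Bool) w, node (ch :: w) ⊆ node w := by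
    intro ch w
    rw [node_cons]
    cases ch
    · simpa using (pickSpec (node w) (nodeC w)).2.2.2.1
    · simpa using (pickSpec (node w) (nodeC w)).2.2.2.2.1
  have nodeSubApp : ∀ u w, node (u ++ w) ⊆ node w := by
    intro u w
    induction u with
    | nil => exact subset_rfl
    | cons ch u ih => exact (nodeSub ch (u ++ w)).trans ih
  have ptMem : ∀ w, pt w ∈ node w := fun w => (pickSpec (node w) (nodeC w)).2.2.1
  have ptLow : ∀ w, ∀ x ∈ node (false :: w), x < pt w := by
    intro w x hx
    rw [node_cons] at hx
    simp only [if_neg Bool.false_ne_true] at hx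
    exact (pickSpec (node w) (nodeC w)).2.2.2.2.2.1 x hx
  have ptHigh : ∀ w, ∀ x ∈ node (true :: w), pt w < x := by
    intro w x hx
    rw [node_cons] at hx
    simp only [if_pos rfl] at hx
    exact (pickSpec (node w) (nodeC w)).2.2.2.2.2.2 x hx
  have ptIn : ∀ u w, pt (u ++ w) ∈ node w := fun u w => nodeSubApp u w (ptMem (u ++ w))
  -- rewriting reversed-list facts into suffix facts
  have revsplit : ∀ (w : List Bool) (p : List Bool) (cb : Bool) (s : List Bool),
      w.reverse = p ++ cb :: s → w = s.reverse ++ cb :: p.reverse := by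
    intro w p cb s h
    have := congrArg List.reverse h
    rw [List.reverse_reverse] at this
    rw [this, List.reverse_append, List.reverse_cons, List.append_assoc]
    simp
  -- density core
  have densCore : ∀ w w', pt w < pt w' → ∃ w'', pt w < pt w'' ∧ pt w'' < pt w' := by
    intro w w' hlt
    rcases listPrefixTri w.reverse w'.reverse with ⟨s, hs⟩ | ⟨s, hs⟩ | ⟨p, cb, cb', s, s', hne, h1, h2⟩
    · -- w' extends w
      cases s with
      | nil =>
        exfalso
        have : w' = w := by
          have := congrArg List.reverse hs
          simpa using this
        rw [this] at hlt; exact lt_irrefl _ hlt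
      | cons cb s₁ =>
        have hw' : w' = s₁.reverse ++ cb :: w := by
          have := revsplit w' w.reverse cb s₁ (by rw [hs])
          simpa using this
        cases cb with
        | false =>
          exfalso
          have : pt w' ∈ node (false :: w) := by rw [hw']; exact ptIn _ _
          exact absurd hlt (not_lt.mpr (ptLow w _ this).le)
        | true =>
          refine ⟨false :: w', ?_, ?_⟩
          · have h1 : pt (false :: w') ∈ node (false :: w') := ptMem _
            have h2 : node (false :: w') ⊆ node w' := nodeSub _ _
            have h3 : node w' ⊆ node (true :: w) := by rw [hw']; exact nodeSubApp _ _
            exact ptHigh w _ (h3 (h2 h1))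
          · exact ptLow w' _ (ptMem _)
    · -- w extends w'
      cases s with
      | nil =>
        exfalso
        have : w = w' := by
          have := congrArg List.reverse hs
          simpa using this
        rw [this] at hlt; exact lt_irrefl _ hlt
      | cons cb s₁ =>
        have hw : w = s₁.reverse ++ cb :: w' := by
          have := revsplit w w'.reverse cb s₁ (by rw [hs])
          simpa using this
        cases cb with
        | true =>
          exfalso
          have : pt w ∈ node (true :: w') := by rw [hw]; exact ptIn _ _
          exact absurd hlt (not_lt.mpr (ptHigh w' _ this).le)
        | false =>
          refine ⟨true :: w, ?_, ?_⟩
          · exact ptHigh w _ (ptMem _)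
          · have h1 : pt (true :: w) ∈ node (true :: w) := ptMem _
            have h2 : node (true :: w) ⊆ node w := nodeSub _ _
            have h3 : node w ⊆ node (false :: w') := by rw [hw]; exact nodeSubApp _ _
            exact ptLow w' _ (h3 (h2 h1))
    · -- diverging
      have hw : w = s.reverse ++ cb :: p.reverse := revsplit w p cb s h1
      have hw' : w' = s'.reverse ++ cb' :: p.reverse := revsplit w' p cb' s' h2
      have hwm : pt w ∈ node (cb :: p.reverse) := by rw [hw]; exact ptIn _ _
      have hwm' : pt w' ∈ node (cb' :: p.reverse) := by rw [hw']; exact ptIn _ _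
      cases cb with
      | false =>
        cases cb' with
        | false => exact absurd rfl hne
        | true =>
          exact ⟨p.reverse, ptLow _ _ hwm, ptHigh _ _ hwm'⟩
      | true =>
        cases cb' with
        | false =>
          exfalso
          have hv1 : pt p.reverse < pt w := ptHigh _ _ hwm
          have hv2 : pt w' < pt p.reverse := ptLow _ _ hwm'
          exact lt_irrefl _ (lt_trans (lt_trans hv1 hlt) hv2)
        | true => exact absurd rfl hne
  refine ⟨Set.range pt, ?_, ?_, ?_⟩
  · rintro x ⟨w, rfl⟩
    have := ptMem w
    have h2 : node w ⊆ Y₀ := by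
      have := nodeSubApp w []
      rw [List.append_nil] at this
      rwa [node_nil] at this
    exact h2 (ptMem w)
  · refine ⟨pt [false], ⟨[false], rfl⟩, pt [], ⟨[], rfl⟩, ?_⟩
    exact ne_of_lt (ptLow [] _ (ptMem [false]))
  · constructor
    rintro ⟨a, wa, rfl⟩ ⟨b, wb, rfl⟩ h
    have h' : pt wa < pt wb := h
    obtain ⟨w'', h1, h2⟩ := densCore wa wb h'
    exact ⟨⟨pt w'', Set.mem_range_self _⟩, h1, h2⟩

end DenseTree
namespace Ctx

variable {L : Type*} [LinearOrder L] [Countable L] (c : Ctx L)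

/-- If P0 embeds into one of its own blocks, then P1 embeds into that block too. -/
theorem qchain0 (s : ℕ) (F : ↥c.P0 → L) (hF : StrictMono F) (hFv : ∀ x, F x ∈ c.Li0 s) :
    ∃ G : ↥c.P1 → L, StrictMono G ∧ ∀ x, G x ∈ c.Li0 s := by
  have deep : ∀ n, ∃ j, n < j ∧ ∃ v : ↥c.P0 → L, StrictMono v ∧ ∀ x, v x ∈ c.Li0 j := by
    intro n
    obtain ⟨j, hj, e, hem, hev⟩ := c.star0_fun s n
    exact ⟨j, hj, fun x => e ⟨F x, hFv x⟩,
      fun a b hab => hem (show (⟨F a, _⟩ : ↥(c.Li0 s)) < ⟨F b, _⟩ from hF hab), fun x => hev _⟩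
  set CC : Set (Set L) := {Y | ∃ W : ↥c.P0 → L, StrictMono W ∧ Set.range W = Y} with hCC
  have hC : ∀ Y ∈ CC, ∃ U ∈ CC, ∃ V ∈ CC, ∃ p ∈ Y,
      U ⊆ Y ∧ V ⊆ Y ∧ (∀ u ∈ U, u < p) ∧ (∀ v ∈ V, p < v) := by
    rintro Y ⟨W, hW, rfl⟩
    obtain ⟨j₁, _, v₁, hv₁m, hv₁⟩ := deep 0
    obtain ⟨j₂, hj₂, v₂, hv₂m, hv₂⟩ := deep (j₁ + 1)
    obtain ⟨m, hm⟩ := c.h0.nonemp (j₁ + 1)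
    set m' : ↥c.P0 := ⟨m, c.li0_subset _ hm⟩ with hm'
    refine ⟨Set.range (fun x => W ⟨v₂ x, c.li0_subset j₂ (hv₂ x)⟩),
      ⟨_, fun a b hab => hW (show (⟨v₂ a, _⟩ : ↥c.P0) < ⟨v₂ b, _⟩ from hv₂m hab), rfl⟩,
      Set.range (fun x => W ⟨v₁ x, c.li0_subset j₁ (hv₁ x)⟩),
      ⟨_, fun a b hab => hW (show (⟨v₁ a, _⟩ : ↥c.P0) < ⟨v₁ b, _⟩ from hv₁m hab), rfl⟩,
      W m', Set.mem_range_self _, ?_, ?_, ?_, ?_⟩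
    · rintro u ⟨x, rfl⟩; exact Set.mem_range_self _
    · rintro u ⟨x, rfl⟩; exact Set.mem_range_self _
    · rintro u ⟨x, rfl⟩
      exact hW (show (⟨v₂ x, _⟩ : ↥c.P0) < m' from
        c.h0.mono (j₁+1) j₂ hj₂ m hm (v₂ x) (hv₂ x))
    · rintro u ⟨x, rfl⟩
      exact hW (show m' < (⟨v₁ x, _⟩ : ↥c.P0) from
        c.h0.mono j₁ (j₁+1) (by omega) (v₁ x) (hv₁ x) m hm)
  obtain ⟨S, hSsub, hSnt, hSdo⟩ := denseTree CC hC (Set.range F) ⟨F, hF, rfl⟩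
  haveI := hSdo
  haveI : Nontrivial ↥S := Set.nontrivial_coe_sort.mpr hSnt
  obtain ⟨e⟩ := Order.embedding_from_countable_to_dense ↥c.P1 ↥S
  refine ⟨fun x => ↑(e x), fun a b hab => Subtype.coe_lt_coe.mpr (e.strictMono hab), fun x => ?_⟩
  obtain ⟨y, hy⟩ := hSsub (e x).2
  show (↑(e x) : L) ∈ _
  rw [← hy]
  exact hFv y

/-- If P1 embeds into one of its own blocks, then P0 embeds into that block too. -/
theorem qchain1 (s : ℕ) (F : ↥c.P1 → L) (hF : StrictMono F) (hFv : ∀ x, F x ∈ c.Li1 s) :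
    ∃ G : ↥c.P0 → L, StrictMono G ∧ ∀ x, G x ∈ c.Li1 s := by
  have deep : ∀ n, ∃ j, n < j ∧ ∃ v : ↥c.P1 → L, StrictMono v ∧ ∀ x, v x ∈ c.Li1 j := by
    intro n
    obtain ⟨j, hj, e, hem, hev⟩ := c.star1_fun s n
    exact ⟨j, hj, fun x => e ⟨F x, hFv x⟩,
      fun a b hab => hem (show (⟨F a, _⟩ : ↥(c.Li1 s)) < ⟨F b, _⟩ from hF hab), fun x => hev _⟩
  set CC : Set (Set L) := {Y | ∃ W : ↥c.P1 → L, StrictMono W ∧ Set.range W = Y} with hCC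
  have hC : ∀ Y ∈ CC, ∃ U ∈ CC, ∃ V ∈ CC, ∃ p ∈ Y,
      U ⊆ Y ∧ V ⊆ Y ∧ (∀ u ∈ U, u < p) ∧ (∀ v ∈ V, p < v) := by
    rintro Y ⟨W, hW, rfl⟩
    obtain ⟨j₁, _, v₁, hv₁m, hv₁⟩ := deep 0
    obtain ⟨j₂, hj₂, v₂, hv₂m, hv₂⟩ := deep (j₁ + 1)
    obtain ⟨m, hm⟩ := c.h1.nonemp (j₁ + 1)
    set m' : ↥c.P1 := ⟨m, c.li1_subset _ hm⟩ with hm'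
    refine ⟨Set.range (fun x => W ⟨v₁ x, c.li1_subset j₁ (hv₁ x)⟩),
      ⟨_, fun a b hab => hW (show (⟨v₁ a, _⟩ : ↥c.P1) < ⟨v₁ b, _⟩ from hv₁m hab), rfl⟩,
      Set.range (fun x => W ⟨v₂ x, c.li1_subset j₂ (hv₂ x)⟩),
      ⟨_, fun a b hab => hW (show (⟨v₂ a, _⟩ : ↥c.P1) < ⟨v₂ b, _⟩ from hv₂m hab), rfl⟩,
      W m', Set.mem_range_self _, ?_, ?_, ?_, ?_⟩
    · rintro u ⟨x, rfl⟩; exact Set.mem_range_self _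
    · rintro u ⟨x, rfl⟩; exact Set.mem_range_self _
    · rintro u ⟨x, rfl⟩
      exact hW (show (⟨v₁ x, _⟩ : ↥c.P1) < m' from
        c.h1.mono j₁ (j₁+1) (by omega) (v₁ x) (hv₁ x) m hm)
    · rintro u ⟨x, rfl⟩
      exact hW (show m' < (⟨v₂ x, _⟩ : ↥c.P1) from
        c.h1.mono (j₁+1) j₂ hj₂ m hm (v₂ x) (hv₂ x))
  obtain ⟨S, hSsub, hSnt, hSdo⟩ := denseTree CC hC (Set.range F) ⟨F, hF, rfl⟩
  haveI := hSdo
  haveI : Nontrivial ↥S := Set.nontrivial_coe_sort.mpr hSnt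
  obtain ⟨e⟩ := Order.embedding_from_countable_to_dense ↥c.P0 ↥S
  refine ⟨fun x => ↑(e x), fun a b hab => Subtype.coe_lt_coe.mpr (e.strictMono hab), fun x => ?_⟩
  obtain ⟨y, hy⟩ := hSsub (e x).2
  show (↑(e x) : L) ∈ _
  rw [← hy]
  exact hFv y

include c

/-- Any copy of L has points below any given point. -/
theorem below (D : Set L) (hD : D ∈ Copies L) (t : L) : ∃ y ∈ D, y < t := by
  by_contra hcon
  push_neg at hcon
  obtain ⟨φ⟩ := hD
  set Ψ : L → L := fun x => ↑(φ.symm x) with hΨ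
  have hΨm : StrictMono Ψ := fun a b hab => Subtype.coe_lt_coe.mpr (φ.symm.strictMono hab)
  have hΨD : ∀ x, Ψ x ∈ D := fun x => (φ.symm x).2
  have hbig : ∀ x, t ≤ Ψ x := fun x => hcon _ (hΨD x)
  -- the P1-valued escape route
  have escape : (∀ x : ↥c.P0, Ψ ↑x ∈ c.P1) → False := by
    intro hall
    obtain ⟨j, G, hGm, hGv⟩ := c.intoBlock1 (fun x : ↥c.P0 => Ψ ↑x)
      (fun a b hab => hΨm hab) hall
    exact c.factA j G hGm hGv
  rcases c.mem_cases t with ht0 | ht1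
  · obtain ⟨i₀, hi₀⟩ := c.mem0_block ht0
    set A₀ : Set L := {y | y ∈ c.P0 ∧ Ψ y ∈ c.P0} with hA₀
    by_cases hA : A₀.Nonempty
    · have hPsub : A₀ ⊆ c.P0 := fun y hy => hy.1
      have hPdc : ∀ x ∈ A₀, ∀ y, y < x → y ∈ c.P0 → y ∈ A₀ := by
        rintro x ⟨hx0, hxΨ⟩ y hyx hy0
        exact ⟨hy0, c.p0_dc hxΨ (hΨm hyx)⟩
      obtain ⟨F₁, hF₁m, hF₁v⟩ := c.selfEmbInitial0 A₀ hPsub hPdc hA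
      set F₂ : ↥c.P0 → L := fun x => Ψ (F₁ x) with hF₂
      have hF₂m : StrictMono F₂ := fun a b hab => hΨm (hF₁m hab)
      have hF₂v : ∀ x, ∃ i, i ≤ i₀ ∧ F₂ x ∈ c.Li0 i := by
        intro x
        have h1 : Ψ (F₁ x) ∈ c.P0 := (hF₁v x).2
        obtain ⟨i, hi⟩ := c.mem0_block h1
        refine ⟨i, ?_, hi⟩
        by_contra h
        have : Ψ (F₁ x) < t := c.h0.mono i₀ i (by omega) t hi₀ _ hi
        exact absurd this (not_lt.mpr (hbig (F₁ x)))
      obtain ⟨s, G, hGm, hGv⟩ := c.intoBlock0 i₀ F₂ hF₂m hF₂v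
      obtain ⟨G', hG'm, hG'v⟩ := c.qchain0 s G hGm hGv
      exact c.factB s G' hG'm hG'v
    · apply escape
      intro x
      rcases c.mem_cases (Ψ ↑x) with h | h
      · exact absurd ⟨x.2, h⟩ (fun hmem => hA ⟨↑x, hmem⟩)
      · exact h
  · apply escape
    intro x
    rcases c.mem_cases (Ψ ↑x) with h | h
    · exact absurd (c.hlt _ h t ht1) (not_lt.mpr (hbig ↑x))
    · exact h

/-- Any copy of L has points above any given point. -/
theorem above (D : Set L) (hD : D ∈ Copies L) (t : L) : ∃ y ∈ D, t < y := by
  by_contra hcon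
  push_neg at hcon
  obtain ⟨φ⟩ := hD
  set Ψ : L → L := fun x => ↑(φ.symm x) with hΨ
  have hΨm : StrictMono Ψ := fun a b hab => Subtype.coe_lt_coe.mpr (φ.symm.strictMono hab)
  have hΨD : ∀ x, Ψ x ∈ D := fun x => (φ.symm x).2
  have hbig : ∀ x, Ψ x ≤ t := fun x => hcon _ (hΨD x)
  have escape : (∀ x : ↥c.P1, Ψ ↑x ∈ c.P0) → False := by
    intro hall
    obtain ⟨j, G, hGm, hGv⟩ := c.intoBlock0' (fun x : ↥c.P1 => Ψ ↑x)
      (fun a b hab => hΨm hab) hall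
    exact c.factB j G hGm hGv
  rcases c.mem_cases t with ht0 | ht1
  · apply escape
    intro x
    rcases c.mem_cases (Ψ ↑x) with h | h
    · exact h
    · exact absurd (c.hlt t ht0 _ h) (not_lt.mpr (hbig ↑x))
  · obtain ⟨i₀, hi₀⟩ := c.mem1_block ht1
    set A₁ : Set L := {y | y ∈ c.P1 ∧ Ψ y ∈ c.P1} with hA₁
    by_cases hA : A₁.Nonempty
    · have hPsub : A₁ ⊆ c.P1 := fun y hy => hy.1
      have hPuc : ∀ x ∈ A₁, ∀ y, x < y → y ∈ c.P1 → y ∈ A₁ := by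
        rintro x ⟨hx1, hxΨ⟩ y hxy hy1
        exact ⟨hy1, c.p1_uc hxΨ (hΨm hxy)⟩
      obtain ⟨F₁, hF₁m, hF₁v⟩ := c.selfEmbFinal1 A₁ hPsub hPuc hA
      set F₂ : ↥c.P1 → L := fun x => Ψ (F₁ x) with hF₂
      have hF₂m : StrictMono F₂ := fun a b hab => hΨm (hF₁m hab)
      have hF₂v : ∀ x, ∃ i, i ≤ i₀ ∧ F₂ x ∈ c.Li1 i := by
        intro x
        have h1 : Ψ (F₁ x) ∈ c.P1 := (hF₁v x).2
        obtain ⟨i, hi⟩ := c.mem1_block h1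
        refine ⟨i, ?_, hi⟩
        by_contra h
        have : t < Ψ (F₁ x) := c.h1.mono i₀ i (by omega) t hi₀ _ hi
        exact absurd this (not_lt.mpr (hbig (F₁ x)))
      obtain ⟨s, G, hGm, hGv⟩ := c.intoBlock1' i₀ F₂ hF₂m hF₂v
      obtain ⟨G', hG'm, hG'v⟩ := c.qchain1 s G hGm hGv
      exact c.factA s G' hG'm hG'v
    · apply escape
      intro x
      rcases c.mem_cases (Ψ ↑x) with h | h
      · exact h
      · exact absurd ⟨x.2, h⟩ (fun hmem => hA ⟨↑x, hmem⟩)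

end Ctx
namespace Ctx

variable {L : Type*} [LinearOrder L] [Countable L] (c : Ctx L)

include c

/-- key step: a copy of block k inside a copy D, entirely below t, with a strict
lower bound below t. -/
theorem keyLow (D : Set L) (hD : D ∈ Copies L) (t : L) (k : ℕ) :
    ∃ f : ↥(c.Li0 k) → L, ∃ b : L, StrictMono f ∧ (∀ x, f x ∈ D) ∧ (∀ x, f x < t) ∧
      b < t ∧ ∀ x, b < f x := by
  obtain ⟨y₀, hy₀D, hy₀t⟩ := c.below D hD t
  obtain ⟨φ⟩ := hD
  set Ψ : L → L := fun x => ↑(φ.symm x) with hΨdef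
  have hΨm : StrictMono Ψ := fun a b hab => Subtype.coe_lt_coe.mpr (φ.symm.strictMono hab)
  have hΨD : ∀ x, Ψ x ∈ D := fun x => (φ.symm x).2
  set x₀ : L := φ ⟨y₀, hy₀D⟩ with hx₀def
  have hΨx₀ : Ψ x₀ = y₀ := by
    show ↑(φ.symm (φ ⟨y₀, hy₀D⟩)) = y₀
    rw [OrderIso.symm_apply_apply]
  have hsmall : ∃ i₁, ∀ j, i₁ ≤ j → ∀ x ∈ c.Li0 j, x < x₀ := by
    rcases c.mem_cases x₀ with h | h
    · obtain ⟨i', hi'⟩ := c.mem0_block h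
      exact ⟨i' + 1, fun j hj x hx => c.h0.mono i' j (by omega) x₀ hi' x hx⟩
    · exact ⟨0, fun j hj x hx => c.hlt x (c.li0_subset j hx) x₀ h⟩
  obtain ⟨i₁, hi₁⟩ := hsmall
  obtain ⟨j, hj, e, hem, hev⟩ := c.star0_fun k i₁
  obtain ⟨m, hm⟩ := c.h0.nonemp (j + 1)
  refine ⟨fun x => Ψ (e x), Ψ m, fun a b hab => hΨm (hem hab), fun x => hΨD _, ?_, ?_, ?_⟩
  · intro x
    have h1 : e x < x₀ := hi₁ j hj.le _ (hev x)
    calc Ψ (e x) < Ψ x₀ := hΨm h1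
    _ = y₀ := hΨx₀
    _ < t := hy₀t
  · have h1 : m < x₀ := hi₁ (j+1) (by omega) m hm
    calc Ψ m < Ψ x₀ := hΨm h1
    _ = y₀ := hΨx₀
    _ < t := hy₀t
  · intro x
    exact hΨm (c.h0.mono j (j+1) (by omega) (e x) (hev x) m hm)

/-- key step, mirrored. -/
theorem keyHigh (D : Set L) (hD : D ∈ Copies L) (t : L) (k : ℕ) :
    ∃ f : ↥(c.Li1 k) → L, ∃ b : L, StrictMono f ∧ (∀ x, f x ∈ D) ∧ (∀ x, t < f x) ∧
      t < b ∧ ∀ x, f x < b := by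
  obtain ⟨y₀, hy₀D, hy₀t⟩ := c.above D hD t
  obtain ⟨φ⟩ := hD
  set Ψ : L → L := fun x => ↑(φ.symm x) with hΨdef
  have hΨm : StrictMono Ψ := fun a b hab => Subtype.coe_lt_coe.mpr (φ.symm.strictMono hab)
  have hΨD : ∀ x, Ψ x ∈ D := fun x => (φ.symm x).2
  set x₀ : L := φ ⟨y₀, hy₀D⟩ with hx₀def
  have hΨx₀ : Ψ x₀ = y₀ := by
    show ↑(φ.symm (φ ⟨y₀, hy₀D⟩)) = y₀
    rw [OrderIso.symm_apply_apply]
  have hsmall : ∃ i₁, ∀ j, i₁ ≤ j → ∀ x ∈ c.Li1 j, x₀ < x := by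
    rcases c.mem_cases x₀ with h | h
    · exact ⟨0, fun j hj x hx => c.hlt x₀ h x (c.li1_subset j hx)⟩
    · obtain ⟨i', hi'⟩ := c.mem1_block h
      exact ⟨i' + 1, fun j hj x hx => c.h1.mono i' j (by omega) x₀ hi' x hx⟩
  obtain ⟨i₁, hi₁⟩ := hsmall
  obtain ⟨j, hj, e, hem, hev⟩ := c.star1_fun k i₁
  obtain ⟨m, hm⟩ := c.h1.nonemp (j + 1)
  refine ⟨fun x => Ψ (e x), Ψ m, fun a b hab => hΨm (hem hab), fun x => hΨD _, ?_, ?_, ?_⟩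
  · intro x
    have h1 : x₀ < e x := hi₁ j hj.le _ (hev x)
    calc t < y₀ := hy₀t
    _ = Ψ x₀ := hΨx₀.symm
    _ < Ψ (e x) := hΨm h1
  · have h1 : x₀ < m := hi₁ (j+1) (by omega) m hm
    calc t < y₀ := hy₀t
    _ = Ψ x₀ := hΨx₀.symm
    _ < Ψ m := hΨm h1
  · intro x
    exact hΨm (c.h1.mono j (j+1) (by omega) (e x) (hev x) m hm)

/-- Master construction: a self-embedding of L with block k landing in the copy
Ds k, ω*-blocks below t and ω-blocks above s. -/
theorem master (Ds : ℕ → Set L) (hDs : ∀ k, Ds k ∈ Copies L) (t s : L)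
    (ht : t ∈ c.P0) (hs : s ∈ c.P1) :
    ∃ g : L → L, StrictMono g ∧
      (∀ k, ∀ x ∈ c.Li0 k, g x ∈ Ds k ∧ g x < t) ∧
      (∀ k, ∀ x ∈ c.Li1 k, g x ∈ Ds k ∧ s < g x) := by
  classical
  have keyL : ∀ (k : ℕ) (t' : L), ∃ fb : (↥(c.Li0 k) → L) × L, StrictMono fb.1 ∧
      (∀ x, fb.1 x ∈ Ds k) ∧ (∀ x, fb.1 x < t') ∧ fb.2 < t' ∧ ∀ x, fb.2 < fb.1 x := by
    intro k t'
    obtain ⟨f, b, h1, h2, h3, h4, h5⟩ := c.keyLow (Ds k) (hDs k) t' k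
    exact ⟨⟨f, b⟩, h1, h2, h3, h4, h5⟩
  have keyR : ∀ (k : ℕ) (s' : L), ∃ fb : (↥(c.Li1 k) → L) × L, StrictMono fb.1 ∧
      (∀ x, fb.1 x ∈ Ds k) ∧ (∀ x, s' < fb.1 x) ∧ s' < fb.2 ∧ ∀ x, fb.1 x < fb.2 := by
    intro k s'
    obtain ⟨f, b, h1, h2, h3, h4, h5⟩ := c.keyHigh (Ds k) (hDs k) s' k
    exact ⟨⟨f, b⟩, h1, h2, h3, h4, h5⟩
  -- left recursion
  let LD : ∀ k : ℕ, (↥(c.Li0 k) → L) × L := fun k => Nat.rec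
    ((keyL 0 t).choose) (fun k ih => (keyL (k+1) ih.2).choose) k
  let lmark : ℕ → L := fun k => (LD k).2
  let lprev : ℕ → L := fun k => match k with | 0 => t | (k+1) => lmark k
  have LDspec : ∀ k, StrictMono (LD k).1 ∧ (∀ x, (LD k).1 x ∈ Ds k) ∧
      (∀ x, (LD k).1 x < lprev k) ∧ lmark k < lprev k ∧ (∀ x, lmark k < (LD k).1 x) := by
    intro k
    cases k with
    | zero => exact (keyL 0 t).choose_spec
    | succ k => exact (keyL (k+1) (lmark k)).choose_spec
  have lmark_dec : ∀ k, lmark (k+1) < lmark k := fun k => (LDspec (k+1)).2.2.2.1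
  have lmark_anti : StrictAnti lmark := strictAnti_nat_of_succ_lt lmark_dec
  have lmark_t : ∀ k, lmark k < t := by
    intro k
    induction k with
    | zero => exact (LDspec 0).2.2.2.1
    | succ k ih => exact lt_trans (lmark_dec k) ih
  have lval_t : ∀ k x, (LD k).1 x < t := by
    intro k x
    cases k with
    | zero => exact (LDspec 0).2.2.1 x
    | succ k => exact lt_trans ((LDspec (k+1)).2.2.1 x) (lmark_t k)
  have lcross : ∀ k l, k < l → ∀ x y, (LD l).1 x < (LD k).1 y := by
    intro k l hkl x y
    cases l with
    | zero => omega
    | succ m =>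
      have h1 : (LD (m+1)).1 x < lmark m := (LDspec (m+1)).2.2.1 x
      have h2 : lmark m ≤ lmark k := lmark_anti.antitone (by omega)
      exact lt_trans (lt_of_lt_of_le h1 h2) ((LDspec k).2.2.2.2 y)
  -- right recursion
  let RD : ∀ k : ℕ, (↥(c.Li1 k) → L) × L := fun k => Nat.rec
    ((keyR 0 s).choose) (fun k ih => (keyR (k+1) ih.2).choose) k
  let rmark : ℕ → L := fun k => (RD k).2
  let rprev : ℕ → L := fun k => match k with | 0 => s | (k+1) => rmark k
  have RDspec : ∀ k, StrictMono (RD k).1 ∧ (∀ x, (RD k).1 x ∈ Ds k) ∧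
      (∀ x, rprev k < (RD k).1 x) ∧ rprev k < rmark k ∧ (∀ x, (RD k).1 x < rmark k) := by
    intro k
    cases k with
    | zero => exact (keyR 0 s).choose_spec
    | succ k => exact (keyR (k+1) (rmark k)).choose_spec
  have rmark_inc : ∀ k, rmark k < rmark (k+1) := fun k => (RDspec (k+1)).2.2.2.1
  have rmark_mono : StrictMono rmark := strictMono_nat_of_lt_succ rmark_inc
  have rmark_s : ∀ k, s < rmark k := by
    intro k
    induction k with
    | zero => exact (RDspec 0).2.2.2.1
    | succ k ih => exact lt_trans ih (rmark_inc k)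
  have rval_s : ∀ k x, s < (RD k).1 x := by
    intro k x
    cases k with
    | zero => exact (RDspec 0).2.2.1 x
    | succ k => exact lt_trans (rmark_s k) ((RDspec (k+1)).2.2.1 x)
  have rcross : ∀ k l, k < l → ∀ x y, (RD k).1 x < (RD l).1 y := by
    intro k l hkl x y
    cases l with
    | zero => omega
    | succ m =>
      have h1 : rmark m < (RD (m+1)).1 y := (RDspec (m+1)).2.2.1 y
      have h2 : rmark k ≤ rmark m := rmark_mono.monotone (by omega)
      exact lt_trans (lt_of_lt_of_le ((RDspec k).2.2.2.2 x) h2) h1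
  -- glue left half
  have hU0 : (⋃ i : ℕᵒᵈ, c.Li0 (OrderDual.ofDual i)) = c.P0 := by
    rw [← c.h0.union]; ext x
    simp only [Set.mem_iUnion]
    exact ⟨fun ⟨i, h⟩ => ⟨OrderDual.ofDual i, h⟩, fun ⟨i, h⟩ => ⟨OrderDual.toDual i, h⟩⟩
  have horder0 : ∀ i j : ℕᵒᵈ, i < j →
      ∀ x ∈ c.Li0 (OrderDual.ofDual i), ∀ y ∈ c.Li0 (OrderDual.ofDual j), x < y := by
    intro i j hij x hx y hy
    exact c.h0.mono (OrderDual.ofDual j) (OrderDual.ofDual i) hij y hy x hx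
  obtain ⟨F0, hF0m, hF0eq, _⟩ := glue (ι := ℕᵒᵈ) (fun i => c.Li0 (OrderDual.ofDual i)) c.P0 hU0
    horder0 (fun i => (LD (OrderDual.ofDual i)).1) (fun i => (LDspec _).1)
    (fun i j hij x y => lcross (OrderDual.ofDual j) (OrderDual.ofDual i) hij x y)
  obtain ⟨F1, hF1m, hF1eq, _⟩ := glue c.Li1 c.P1 c.h1.union c.h1.mono
    (fun i => (RD i).1) (fun i => (RDspec _).1) (fun i j hij x y => rcross i j hij x y)
  -- F0 values
  have hF0t : ∀ x, F0 x < t := by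
    intro x
    obtain ⟨k, hk⟩ := c.mem0_block x.2
    rw [hF0eq (OrderDual.toDual k) x hk]
    exact lval_t k _
  have hF1s : ∀ x, s < F1 x := by
    intro x
    obtain ⟨k, hk⟩ := c.mem1_block x.2
    rw [hF1eq k x hk]
    exact rval_s k _
  -- combine
  set g : L → L := fun x => if h : x ∈ c.P0 then F0 ⟨x, h⟩
    else F1 ⟨x, (c.mem_cases x).resolve_left h⟩ with hgdef
  have hg0 : ∀ (x : L) (h : x ∈ c.P0), g x = F0 ⟨x, h⟩ := by
    intro x h; simp only [hgdef, dif_pos h]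
  have hg1 : ∀ (x : L) (h : x ∈ c.P1), g x = F1 ⟨x, h⟩ := by
    intro x h
    have h' : ¬ x ∈ c.P0 := fun h0 => c.not_both h0 h
    simp only [hgdef, dif_neg h']
  have hgm : StrictMono g := by
    intro a b hab
    by_cases ha : a ∈ c.P0
    · by_cases hb : b ∈ c.P0
      · rw [hg0 a ha, hg0 b hb]
        exact hF0m (show (⟨a, ha⟩ : ↥c.P0) < ⟨b, hb⟩ from hab)
      · have hb1 : b ∈ c.P1 := (c.mem_cases b).resolve_left hb
        rw [hg0 a ha, hg1 b hb1]
        have h1 : F0 ⟨a, ha⟩ ∈ c.P0 := c.p0_dc ht (hF0t _)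
        have h2 : F1 ⟨b, hb1⟩ ∈ c.P1 := c.p1_uc hs (hF1s _)
        exact c.hlt _ h1 _ h2
    · have ha1 : a ∈ c.P1 := (c.mem_cases a).resolve_left ha
      have hb1 : b ∈ c.P1 := c.p1_uc ha1 hab
      rw [hg1 a ha1, hg1 b hb1]
      exact hF1m (show (⟨a, ha1⟩ : ↥c.P1) < ⟨b, hb1⟩ from hab)
  refine ⟨g, hgm, ?_, ?_⟩
  · intro k x hx
    have hx0 : x ∈ c.P0 := c.li0_subset k hx
    rw [hg0 x hx0]
    have heq : F0 ⟨x, hx0⟩ = (LD k).1 ⟨x, hx⟩ := hF0eq (OrderDual.toDual k) ⟨x, hx0⟩ hx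
    rw [heq]
    exact ⟨(LDspec k).2.1 _, lval_t k _⟩
  · intro k x hx
    have hx1 : x ∈ c.P1 := c.li1_subset k hx
    rw [hg1 x hx1]
    have heq : F1 ⟨x, hx1⟩ = (RD k).1 ⟨x, hx⟩ := hF1eq k ⟨x, hx1⟩ hx
    rw [heq]
    exact ⟨(RDspec k).2.1 _, rval_s k _⟩

end Ctx
section Final

variable {L : Type*} [LinearOrder L]

theorem copyLE_trans {X Y Z : Set L} (h1 : copyLE X Y) (h2 : copyLE Y Z) : copyLE X Z := by
  intro C hC hCX
  obtain ⟨D, hD, hDsub⟩ := h1 C hC hCX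
  obtain ⟨E, hE, hEsub⟩ := h2 D hD (fun x hx => (hDsub hx).2)
  exact ⟨E, hE, fun x hx => ⟨(hDsub (hEsub hx).1).1, (hEsub hx).2⟩⟩

theorem copyLE_refl (X : Set L) : copyLE X X := by
  intro C hC hCX
  exact ⟨C, hC, fun x hx => ⟨hx, hCX hx⟩⟩

end Final
end Stmt17Aux
/-- ω*-sum plus ω-sum: the separative modification
`⟨ℙ(L), ≤*⟩` is σ-closed. -/
theorem stmt17 {L : Type*} [LinearOrder L] [Countable L]
    (P0 P1 : Set L) (hcover : P0 ∪ P1 = univ) (hdisj : Disjoint P0 P1)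
    (hlt : ∀ x ∈ P0, ∀ y ∈ P1, x < y)
    (Li0 Li1 : ℕ → Set L)
    (h0 : IsOmegaStarSumH P0 Li0) (h1 : IsOmegaSumH P1 Li1)
    (hnH : ¬ TypeInH L)
    (A : ℕ → Set L) (hA : ∀ k, A k ∈ Copies L)
    (hdec : ∀ k, copyLE (A (k + 1)) (A k)) :
    ∃ B ∈ Copies L, ∀ k, copyLE B (A k) := by
  classical
  set c : Stmt17Aux.Ctx L := ⟨P0, P1, Li0, Li1, hcover, hdisj, hlt, h0, h1, hnH⟩ with hc
  -- transitive chain of the ≤* relation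
  have lechain : ∀ k j, j ≤ k → copyLE (A k) (A j) := by
    intro k
    induction k with
    | zero =>
      intro j hj
      have : j = 0 := by omega
      rw [this]
      exact Stmt17Aux.copyLE_refl _
    | succ k ih =>
      intro j hj
      rcases Nat.lt_succ_iff_lt_or_eq.mp (Nat.lt_succ_of_le hj) with h | h
      · exact Stmt17Aux.copyLE_trans (hdec k) (ih j (by omega))
      · rw [h]
        exact Stmt17Aux.copyLE_refl _
  -- a copy inside all of A 0, ..., A k
  have chainD : ∀ k, ∃ D ∈ Copies L, ∀ j ≤ k, D ⊆ A j := by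
    intro k
    have inner : ∀ r, ∃ D ∈ Copies L, D ⊆ A k ∧ ∀ j, k - r ≤ j → j ≤ k → D ⊆ A j := by
      intro r
      induction r with
      | zero =>
        refine ⟨A k, hA k, subset_rfl, ?_⟩
        intro j h1j h2j
        have : j = k := by omega
        rw [this]
      | succ r ih =>
        obtain ⟨D, hD, hDk, hDj⟩ := ih
        obtain ⟨D', hD', hD'sub⟩ := lechain k (k - (r+1)) (by omega) D hD hDk
        have hD'D : D' ⊆ D := fun x hx => (hD'sub hx).1
        refine ⟨D', hD', hD'D.trans hDk, ?_⟩
        intro j h1j h2j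
        by_cases hcase : k - r ≤ j
        · exact hD'D.trans (hDj j hcase h2j)
        · have : j = k - (r+1) := by omega
          rw [this]
          exact fun x hx => (hD'sub hx).2
    obtain ⟨D, hD, _, hDj⟩ := inner k
    exact ⟨D, hD, fun j hj => hDj j (by omega) hj⟩
  choose Ds hDsC hDsA using chainD
  obtain ⟨t₀, ht₀⟩ := h0.nonemp 0
  obtain ⟨s₀, hs₀⟩ := h1.nonemp 0
  obtain ⟨g, hgm, hg0, hg1⟩ := c.master Ds hDsC t₀ s₀
    (c.li0_subset 0 ht₀) (c.li1_subset 0 hs₀)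
  refine ⟨Set.range g, ⟨(hgm.orderIso g).symm⟩, ?_⟩
  intro k C hC hCB
  set C' : Set L := g ⁻¹' C with hC'def
  have hC'copy : C' ∈ Copies L := ⟨(Stmt17Aux.preimgIso g hgm C hCB).trans hC.some⟩
  obtain ⟨t₁, ht₁⟩ := h0.nonemp k
  obtain ⟨s₁, hs₁⟩ := h1.nonemp k
  obtain ⟨g', hg'm, hg'0, hg'1⟩ := c.master (fun _ => C') (fun _ => hC'copy) t₁ s₁
    (c.li0_subset k ht₁) (c.li1_subset k hs₁)
  refine ⟨g '' (Set.range g'),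
    ⟨(Stmt17Aux.imgIso g hgm _).symm.trans (hg'm.orderIso g').symm⟩, ?_⟩
  rintro y ⟨z, ⟨x, rfl⟩, rfl⟩
  have hxblock : x ∈ c.P0 ∨ x ∈ c.P1 := c.mem_cases x
  have main : g' x ∈ C' ∧ g (g' x) ∈ A k := by
    rcases hxblock with hx | hx
    · obtain ⟨m, hm⟩ := c.mem0_block hx
      obtain ⟨hmem, hlt'⟩ := hg'0 m x hm
      refine ⟨hmem, ?_⟩
      obtain ⟨m', hm'k, hm'⟩ := c.below_block0 ht₁ hlt'
      have := hg0 m' (g' x) hm'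
      exact hDsA m' k hm'k this.1
    · obtain ⟨m, hm⟩ := c.mem1_block hx
      obtain ⟨hmem, hlt'⟩ := hg'1 m x hm
      refine ⟨hmem, ?_⟩
      obtain ⟨m', hm'k, hm'⟩ := c.above_block1 hs₁ hlt'
      have := hg1 m' (g' x) hm'
      exact hDsA m' k hm'k this.1
  exact ⟨main.1, main.2⟩
end

section
/- There is no countable linear order L that is simultaneously the ω*-sum of a sequence ⟨L⁰_i : i∈ω⟩ of members of ℋ satisfying condition (*) and the ω-sum of a sequence ⟨L¹_i : i∈ω⟩ of members of ℋ satisfying condition (*). -/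
open Set

/-- An order `α` cannot contain two "stacked" copies of itself: there are no
order embeddings `f g : α ↪o α` with every point of `ran f` below every point
of `ran g`. This holds for all members of ℋ. -/
def NoStackT (α : Type*) [LinearOrder α] : Prop :=
  ∀ f g : α ↪o α, ¬ ∀ x y, f x < g y

theorem noStackT_of_iso {α β : Type*} [LinearOrder α] [LinearOrder β]
    (e : α ≃o β) (h : NoStackT α) : NoStackT β := by
  intro f g hfg
  refine h ((e.toOrderEmbedding.trans f).trans e.symm.toOrderEmbedding)
    ((e.toOrderEmbedding.trans g).trans e.symm.toOrderEmbedding) ?_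
  intro x y
  show e.symm (f (e x)) < e.symm (g (e y))
  exact e.symm.lt_iff_lt.mpr (hfg (e x) (e y))

theorem mono_bdd_eventually_const (φ : ℕ → ℕ) (hφ : ∀ i j, i ≤ j → φ i ≤ φ j) :
    ∀ k : ℕ, (∀ j, φ j ≤ k) → ∃ J, ∀ j, J ≤ j → φ j = φ J := by
  intro k
  induction k with
  | zero =>
    intro hb
    exact ⟨0, fun j _ => by have h1 := hb j; have h2 := hb 0; omega⟩
  | succ k ih =>
    intro hb
    by_cases h : ∃ j0, φ j0 = k + 1
    · obtain ⟨j0, hj0⟩ := h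
      exact ⟨j0, fun j hj => by have h1 := hφ j0 j hj; have h2 := hb j; omega⟩
    · push_neg at h
      exact ih fun j => by have h1 := hb j; have h2 := h j; omega

theorem noStack_of_inH : ∀ {K : Set ℚ}, InH K → NoStackT ↥K := by
  intro K h
  induction h with
  | singleton q =>
    intro f g hfg
    have h1 : ((f ⟨q, rfl⟩ : ↥({q} : Set ℚ)) : ℚ) = q := (f ⟨q, rfl⟩).2
    have h2 : ((g ⟨q, rfl⟩ : ↥({q} : Set ℚ)) : ℚ) = q := (g ⟨q, rfl⟩).2
    have h3 := Subtype.coe_lt_coe.mpr (hfg ⟨q, rfl⟩ ⟨q, rfl⟩)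
    rw [h1, h2] at h3
    exact lt_irrefl _ h3
  | iso _ hiso ih =>
    obtain ⟨e⟩ := hiso
    exact noStackT_of_iso e ih
  | omegaSum M hne hH hstar hlt ih =>
    intro f g hfg
    have hpt : ∀ i, ((hne i).choose) ∈ M i := fun i => (hne i).choose_spec
    set pt : ℕ → ↥(⋃ i, M i) :=
      fun i => ⟨(hne i).choose, Set.mem_iUnion.mpr ⟨i, hpt i⟩⟩ with hptdef
    have hptmem : ∀ i, (pt i : ℚ) ∈ M i := hpt
    have hidx : ∀ (a b : ℚ) (i j : ℕ), a ∈ M i → b ∈ M j → a < b → i ≤ j := by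
      intro a b i j ha hb hab
      by_contra hc
      exact absurd (hlt j i (by omega) b hb a ha) (not_lt.mpr hab.le)
    have hptlt : ∀ i j, i < j → pt i < pt j := fun i j hij =>
      Subtype.coe_lt_coe.mp (hlt i j hij _ (hptmem i) _ (hptmem j))
    have hmemf : ∀ x : ↥(⋃ i, M i), ∃ i, ((f x : ↥(⋃ i, M i)) : ℚ) ∈ M i :=
      fun x => Set.mem_iUnion.mp (f x).2
    set φ : ℕ → ℕ := fun j => (hmemf (pt j)).choose with hφdef
    have hφmem : ∀ j, ((f (pt j) : ↥(⋃ i, M i)) : ℚ) ∈ M (φ j) :=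
      fun j => (hmemf (pt j)).choose_spec
    have hφmono : ∀ i j, i ≤ j → φ i ≤ φ j := by
      intro i j hij
      rcases eq_or_lt_of_le hij with rfl | hij'
      · exact le_refl _
      · exact hidx _ _ _ _ (hφmem i) (hφmem j)
          (Subtype.coe_lt_coe.mpr (f.lt_iff_lt.mpr (hptlt i j hij')))
    obtain ⟨k, hgk⟩ := Set.mem_iUnion.mp (g (pt 0)).2
    have hφbd : ∀ j, φ j ≤ k := fun j =>
      hidx _ _ _ _ (hφmem j) hgk (Subtype.coe_lt_coe.mpr (hfg (pt j) (pt 0)))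
    obtain ⟨J, hJ⟩ := mono_bdd_eventually_const φ hφmono k hφbd
    have hpiece : ∀ j, J < j → ∀ x : ↥(⋃ i, M i), (x : ℚ) ∈ M j →
        ((f x : ↥(⋃ i, M i)) : ℚ) ∈ M (φ J) := by
      intro j hj x hx
      obtain ⟨d, hd⟩ := Set.mem_iUnion.mp (f x).2
      have h1 : pt J < x := Subtype.coe_lt_coe.mp (hlt J j hj _ (hptmem J) _ hx)
      have h2 : x < pt (j + 1) :=
        Subtype.coe_lt_coe.mp (hlt j (j + 1) (by omega) _ hx _ (hptmem (j + 1)))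
      have hc1 : φ J ≤ d := hidx _ _ _ _ (hφmem J) hd
        (Subtype.coe_lt_coe.mpr (f.lt_iff_lt.mpr h1))
      have hc2 : d ≤ φ J := by
        have h3 := hidx _ _ _ _ hd (hφmem (j + 1))
          (Subtype.coe_lt_coe.mpr (f.lt_iff_lt.mpr h2))
        rwa [hJ (j + 1) (by omega)] at h3
      have h4 : d = φ J := le_antisymm hc2 hc1
      rwa [h4] at hd
    obtain ⟨j1, hj1mem, hj1⟩ := (hstar (φ J)).exists_gt J
    obtain ⟨j2, hj2mem, hj2⟩ := (hstar (φ J)).exists_gt j1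
    obtain ⟨e1⟩ := hj1mem
    obtain ⟨e2⟩ := hj2mem
    have hm1 : ∀ x : ↥(M (φ J)), ((e1 x : ↥(M j1)) : ℚ) ∈ ⋃ i, M i :=
      fun x => Set.mem_iUnion.mpr ⟨j1, (e1 x).2⟩
    have hm2 : ∀ x : ↥(M (φ J)), ((e2 x : ↥(M j2)) : ℚ) ∈ ⋃ i, M i :=
      fun x => Set.mem_iUnion.mpr ⟨j2, (e2 x).2⟩
    set F : ↥(M (φ J)) → ↥(M (φ J)) :=
      fun x => ⟨((f ⟨_, hm1 x⟩ : ↥(⋃ i, M i)) : ℚ), hpiece j1 hj1 _ (e1 x).2⟩ with hFdef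
    set G : ↥(M (φ J)) → ↥(M (φ J)) :=
      fun x => ⟨((f ⟨_, hm2 x⟩ : ↥(⋃ i, M i)) : ℚ),
        hpiece j2 (lt_trans hj1 hj2) _ (e2 x).2⟩ with hGdef
    have hFs : StrictMono F := by
      intro x y hxy
      exact Subtype.mk_lt_mk.mpr (Subtype.coe_lt_coe.mpr (f.lt_iff_lt.mpr
        (Subtype.mk_lt_mk.mpr (Subtype.coe_lt_coe.mpr (e1.lt_iff_lt.mpr hxy)))))
    have hGs : StrictMono G := by
      intro x y hxy
      exact Subtype.mk_lt_mk.mpr (Subtype.coe_lt_coe.mpr (f.lt_iff_lt.mpr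
        (Subtype.mk_lt_mk.mpr (Subtype.coe_lt_coe.mpr (e2.lt_iff_lt.mpr hxy)))))
    refine ih (φ J) (OrderEmbedding.ofStrictMono F hFs)
      (OrderEmbedding.ofStrictMono G hGs) ?_
    intro x y
    show F x < G y
    exact Subtype.mk_lt_mk.mpr (Subtype.coe_lt_coe.mpr (f.lt_iff_lt.mpr
      (Subtype.mk_lt_mk.mpr (hlt j1 j2 hj2 _ (e1 x).2 _ (e2 y).2))))
  | omegaStarSum M hne hH hstar hlt ih =>
    intro f g hfg
    have hpt : ∀ i, ((hne i).choose) ∈ M i := fun i => (hne i).choose_spec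
    set pt : ℕ → ↥(⋃ i, M i) :=
      fun i => ⟨(hne i).choose, Set.mem_iUnion.mpr ⟨i, hpt i⟩⟩ with hptdef
    have hptmem : ∀ i, (pt i : ℚ) ∈ M i := hpt
    -- in the ω*-sum, larger value means smaller index
    have hidx : ∀ (a b : ℚ) (i j : ℕ), a ∈ M i → b ∈ M j → a < b → j ≤ i := by
      intro a b i j ha hb hab
      by_contra hc
      exact absurd (hlt i j (by omega) a ha b hb) (not_lt.mpr hab.le)
    have hptlt : ∀ i j, i < j → pt j < pt i := fun i j hij =>
      Subtype.coe_lt_coe.mp (hlt i j hij _ (hptmem i) _ (hptmem j))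
    have hmemg : ∀ x : ↥(⋃ i, M i), ∃ i, ((g x : ↥(⋃ i, M i)) : ℚ) ∈ M i :=
      fun x => Set.mem_iUnion.mp (g x).2
    set φ : ℕ → ℕ := fun j => (hmemg (pt j)).choose with hφdef
    have hφmem : ∀ j, ((g (pt j) : ↥(⋃ i, M i)) : ℚ) ∈ M (φ j) :=
      fun j => (hmemg (pt j)).choose_spec
    have hφmono : ∀ i j, i ≤ j → φ i ≤ φ j := by
      intro i j hij
      rcases eq_or_lt_of_le hij with rfl | hij'
      · exact le_refl _
      · exact hidx _ _ _ _ (hφmem j) (hφmem i)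
          (Subtype.coe_lt_coe.mpr (g.lt_iff_lt.mpr (hptlt i j hij')))
    obtain ⟨k, hfk⟩ := Set.mem_iUnion.mp (f (pt 0)).2
    have hφbd : ∀ j, φ j ≤ k := fun j =>
      hidx _ _ _ _ hfk (hφmem j) (Subtype.coe_lt_coe.mpr (hfg (pt 0) (pt j)))
    obtain ⟨J, hJ⟩ := mono_bdd_eventually_const φ hφmono k hφbd
    have hpiece : ∀ j, J < j → ∀ x : ↥(⋃ i, M i), (x : ℚ) ∈ M j →
        ((g x : ↥(⋃ i, M i)) : ℚ) ∈ M (φ J) := by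
      intro j hj x hx
      obtain ⟨d, hd⟩ := Set.mem_iUnion.mp (g x).2
      have h1 : x < pt J := Subtype.coe_lt_coe.mp (hlt J j hj _ (hptmem J) _ hx)
      have h2 : pt (j + 1) < x :=
        Subtype.coe_lt_coe.mp (hlt j (j + 1) (by omega) _ hx _ (hptmem (j + 1)))
      have hc1 : φ J ≤ d := hidx _ _ _ _ hd (hφmem J)
        (Subtype.coe_lt_coe.mpr (g.lt_iff_lt.mpr h1))
      have hc2 : d ≤ φ J := by
        have h3 := hidx _ _ _ _ (hφmem (j + 1)) hd
          (Subtype.coe_lt_coe.mpr (g.lt_iff_lt.mpr h2))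
        rwa [hJ (j + 1) (by omega)] at h3
      have h4 : d = φ J := le_antisymm hc2 hc1
      rwa [h4] at hd
    obtain ⟨j1, hj1mem, hj1⟩ := (hstar (φ J)).exists_gt J
    obtain ⟨j2, hj2mem, hj2⟩ := (hstar (φ J)).exists_gt j1
    obtain ⟨e1⟩ := hj1mem
    obtain ⟨e2⟩ := hj2mem
    have hm1 : ∀ x : ↥(M (φ J)), ((e1 x : ↥(M j1)) : ℚ) ∈ ⋃ i, M i :=
      fun x => Set.mem_iUnion.mpr ⟨j1, (e1 x).2⟩
    have hm2 : ∀ x : ↥(M (φ J)), ((e2 x : ↥(M j2)) : ℚ) ∈ ⋃ i, M i :=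
      fun x => Set.mem_iUnion.mpr ⟨j2, (e2 x).2⟩
    set F : ↥(M (φ J)) → ↥(M (φ J)) :=
      fun x => ⟨((g ⟨_, hm2 x⟩ : ↥(⋃ i, M i)) : ℚ),
        hpiece j2 (lt_trans hj1 hj2) _ (e2 x).2⟩ with hFdef
    set G : ↥(M (φ J)) → ↥(M (φ J)) :=
      fun x => ⟨((g ⟨_, hm1 x⟩ : ↥(⋃ i, M i)) : ℚ), hpiece j1 hj1 _ (e1 x).2⟩ with hGdef
    have hFs : StrictMono F := by
      intro x y hxy
      exact Subtype.mk_lt_mk.mpr (Subtype.coe_lt_coe.mpr (g.lt_iff_lt.mpr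
        (Subtype.mk_lt_mk.mpr (Subtype.coe_lt_coe.mpr (e2.lt_iff_lt.mpr hxy)))))
    have hGs : StrictMono G := by
      intro x y hxy
      exact Subtype.mk_lt_mk.mpr (Subtype.coe_lt_coe.mpr (g.lt_iff_lt.mpr
        (Subtype.mk_lt_mk.mpr (Subtype.coe_lt_coe.mpr (e1.lt_iff_lt.mpr hxy)))))
    refine ih (φ J) (OrderEmbedding.ofStrictMono F hFs)
      (OrderEmbedding.ofStrictMono G hGs) ?_
    intro x y
    show F x < G y
    exact Subtype.mk_lt_mk.mpr (Subtype.coe_lt_coe.mpr (g.lt_iff_lt.mpr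
      (Subtype.mk_lt_mk.mpr (hlt j1 j2 hj2 _ (e1 y).2 _ (e2 x).2))))

/-- no countable linear order is simultaneously the ω*-sum and
the ω-sum of sequences of members of ℋ satisfying (*). -/
theorem stmt19 (L : Type*) [LinearOrder L] [Countable L] :
    ¬ ∃ (Li0 Li1 : ℕ → Set L),
      IsOmegaStarSumH (univ : Set L) Li0 ∧ IsOmegaSumH (univ : Set L) Li1 := by
  rintro ⟨N, M, h0, h1⟩
  have hmemM : ∀ x : L, ∃ i, x ∈ M i := fun x =>
    Set.mem_iUnion.mp (h1.union ▸ Set.mem_univ x)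
  have hmemN : ∀ x : L, ∃ i, x ∈ N i := fun x =>
    Set.mem_iUnion.mp (h0.union ▸ Set.mem_univ x)
  obtain ⟨x0, hx0⟩ := h0.nonemp 0
  obtain ⟨k, hk0⟩ := hmemM x0
  have hk : ∀ j, k < j → M j ⊆ N 0 := by
    intro j hj y hy
    obtain ⟨j', hj'⟩ := hmemN y
    rcases Nat.eq_zero_or_pos j' with rfl | hpos
    · exact hj'
    · exact absurd (h1.mono k j hj x0 hk0 y hy)
        (not_lt.mpr (h0.mono 0 j' hpos x0 hx0 y hj').le)
  obtain ⟨y0, hy0⟩ := h1.nonemp 0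
  obtain ⟨m, hm0⟩ := hmemN y0
  have hm : ∀ j, m < j → N j ⊆ M 0 := by
    intro j hj y hy
    obtain ⟨j', hj'⟩ := hmemM y
    rcases Nat.eq_zero_or_pos j' with rfl | hpos
    · exact hj'
    · exact absurd (h1.mono 0 j' hpos y0 hy0 y hj')
        (not_lt.mpr (h0.mono m j hj y0 hm0 y hy).le)
  obtain ⟨j0, hj0mem, hj0⟩ := (h0.star 0).exists_gt m
  obtain ⟨i1, hi1mem, hi1⟩ := (h1.star 0).exists_gt k
  obtain ⟨i2, hi2mem, hi2⟩ := (h1.star 0).exists_gt i1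
  obtain ⟨e0⟩ := hj0mem
  obtain ⟨e1⟩ := hi1mem
  obtain ⟨e2⟩ := hi2mem
  obtain ⟨K0, hK0, ⟨iso0⟩⟩ := h0.inH 0
  have hns : NoStackT ↥(N 0) := noStackT_of_iso iso0.symm (noStack_of_inH hK0)
  have hfmem : ∀ x : ↥(N 0), ((e0 x : ↥(N j0)) : L) ∈ M 0 :=
    fun x => hm j0 hj0 (e0 x).2
  set F : ↥(N 0) → ↥(N 0) :=
    fun x => ⟨((e1 ⟨_, hfmem x⟩ : ↥(M i1)) : L), hk i1 hi1 (e1 _).2⟩ with hFdef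
  set G : ↥(N 0) → ↥(N 0) :=
    fun x => ⟨((e2 ⟨_, hfmem x⟩ : ↥(M i2)) : L),
      hk i2 (lt_trans hi1 hi2) (e2 _).2⟩ with hGdef
  have hFs : StrictMono F := by
    intro x y hxy
    exact Subtype.mk_lt_mk.mpr (Subtype.coe_lt_coe.mpr (e1.lt_iff_lt.mpr
      (Subtype.mk_lt_mk.mpr (Subtype.coe_lt_coe.mpr (e0.lt_iff_lt.mpr hxy)))))
  have hGs : StrictMono G := by
    intro x y hxy
    exact Subtype.mk_lt_mk.mpr (Subtype.coe_lt_coe.mpr (e2.lt_iff_lt.mpr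
      (Subtype.mk_lt_mk.mpr (Subtype.coe_lt_coe.mpr (e0.lt_iff_lt.mpr hxy)))))
  refine hns (OrderEmbedding.ofStrictMono F hFs) (OrderEmbedding.ofStrictMono G hGs) ?_
  intro x y
  show F x < G y
  exact Subtype.mk_lt_mk.mpr (h1.mono i1 i2 hi2 _ (e1 _).2 _ (e2 _).2)
end
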